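/- arXiv:2504.18993 — 6 statements merged into one kernel-verified Lean document; each statement's English description precedes it below -/
import Mathlib

section
/- With f_n as in the previous context (piecewise linear with slopes b/a on intervals of length a and a/b on intervals of length b, where a + b = 1/n), for fixed 0 < p < 1 one has ∫_0^1 |f_n'(x)|^p dx = (an)^{1-p}(bn)^p + (bn)^{1-p}(an)^p. In particular, if a = a(n) is chosen so that lim_n a·n = 0, then ∫_0^1 |f_n'|^p dx → 0 as n → ∞. -/
open MeasureTheory

theorem stmt_3 (p : ℝ) (hp0 : 0 < p) (hp1 : p < 1) :
    (∀ (n : ℕ), 0 < n → ∀ (a b : ℝ), 0 < a → 0 < b → a + b = 1 / n →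
      ∀ S : Set ℝ, MeasurableSet S → S ⊆ Set.Icc 0 1 →
        volume S = ENNReal.ofReal (n * a) →
      ∫ x in Set.Icc (0 : ℝ) 1,
          |S.indicator (fun _ => b / a) x
            + (Set.Icc (0 : ℝ) 1 \ S).indicator (fun _ => a / b) x| ^ p
        = (a * n) ^ (1 - p) * (b * n) ^ p + (b * n) ^ (1 - p) * (a * n) ^ p) ∧
    (∀ a : ℕ → ℝ, (∀ n : ℕ, 0 < a n ∧ a n < 1 / n) →
      Filter.Tendsto (fun n : ℕ => a n * n) Filter.atTop (nhds 0) →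
      Filter.Tendsto
        (fun n : ℕ => (a n * n) ^ (1 - p) * (1 - a n * n) ^ p
          + (1 - a n * n) ^ (1 - p) * (a n * n) ^ p)
        Filter.atTop (nhds 0)) := by
  constructor
  · intro n hn a b ha hb hab S hS hSsub hSvol
    have hnpos : (0:ℝ) < n := Nat.cast_pos.mpr hn
    have hsum : (n:ℝ) * a + (n:ℝ) * b = 1 := by
      have h : (n:ℝ) * (a + b) = 1 := by
        rw [hab]; field_simp
      linarith [h]
    have hna : (0:ℝ) < n * a := by positivity
    have hnb : (0:ℝ) < n * b := by positivity
    set F : ℝ → ℝ := fun x =>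
      |S.indicator (fun _ => b / a) x
            + (Set.Icc (0 : ℝ) 1 \ S).indicator (fun _ => a / b) x| ^ p with hF
    have hT : MeasurableSet (Set.Icc (0:ℝ) 1 \ S) := measurableSet_Icc.diff hS
    have hEOn1 : Set.EqOn F (fun _ => (b/a)^p) S := by
      intro x hx
      have hx2 : x ∉ Set.Icc (0:ℝ) 1 \ S := fun h => h.2 hx
      simp only [hF, Set.indicator_of_mem hx, Set.indicator_of_notMem hx2, add_zero,
        abs_of_pos (div_pos hb ha)]
    have hEOn2 : Set.EqOn F (fun _ => (a/b)^p) (Set.Icc (0:ℝ) 1 \ S) := by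
      intro x hx
      have hx2 : x ∉ S := hx.2
      simp only [hF, Set.indicator_of_mem hx, Set.indicator_of_notMem hx2, zero_add,
        abs_of_pos (div_pos ha hb)]
    have hvolS : volume S ≠ ⊤ := by rw [hSvol]; exact ENNReal.ofReal_ne_top
    have hvolT : volume (Set.Icc (0:ℝ) 1 \ S) = ENNReal.ofReal (n * b) := by
      rw [measure_diff hSsub hS.nullMeasurableSet hvolS, hSvol, Real.volume_Icc]
      rw [show (1:ℝ) - 0 = 1 by ring, ← ENNReal.ofReal_sub _ hna.le]
      congr 1; linarith
    have hint1 : IntegrableOn F S volume := by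
      refine (integrableOn_const (C := (b/a)^p) ?_).congr_fun hEOn1.symm hS
      rw [hSvol]; exact ENNReal.ofReal_ne_top
    have hint2 : IntegrableOn F (Set.Icc (0:ℝ) 1 \ S) volume := by
      refine (integrableOn_const (C := (a/b)^p) ?_).congr_fun hEOn2.symm hT
      rw [hvolT]; exact ENNReal.ofReal_ne_top
    have hsplit : Set.Icc (0:ℝ) 1 = S ∪ (Set.Icc (0:ℝ) 1 \ S) :=
      (Set.union_diff_cancel hSsub).symm
    have key : ∀ x y : ℝ, 0 < x → 0 < y →
        (n:ℝ) * x * (y/x)^p = (x*n)^(1-p)*(y*n)^p := by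
      intro x y hx hy
      have h1 : (y/x)^p = y^p/x^p := Real.div_rpow hy.le hx.le p
      have h2 : x^(1-p) = x / x^p := by rw [Real.rpow_sub hx, Real.rpow_one]
      have h3 : (x*(n:ℝ))^(1-p) = x^(1-p) * (n:ℝ)^(1-p) := Real.mul_rpow hx.le (n.cast_nonneg)
      have h4 : (y*(n:ℝ))^p = y^p * (n:ℝ)^p := Real.mul_rpow hy.le (n.cast_nonneg)
      have h5 : (n:ℝ)^(1-p) * (n:ℝ)^p = n := by
        rw [← Real.rpow_add hnpos, sub_add_cancel, Real.rpow_one]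
      have hxp : (0:ℝ) < x^p := Real.rpow_pos_of_pos hx p
      rw [h1, h3, h4, h2,
        show x/x^p * (n:ℝ)^(1-p) * (y^p * (n:ℝ)^p) = x/x^p * y^p * ((n:ℝ)^(1-p)*(n:ℝ)^p) from
          by ring, h5]
      field_simp
    rw [hsplit, setIntegral_union Set.disjoint_sdiff_right hT hint1 hint2,
      setIntegral_congr_fun hS hEOn1, setIntegral_congr_fun hT hEOn2,
      setIntegral_const, setIntegral_const, measureReal_def, measureReal_def, hSvol, hvolT,
      ENNReal.toReal_ofReal hna.le, ENNReal.toReal_ofReal hnb.le,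
      smul_eq_mul, smul_eq_mul, key a b ha hb, key b a hb ha]
  · intro a ha htend
    have hcont : ContinuousAt
        (fun x : ℝ => x ^ (1-p) * (1-x) ^ p + (1-x) ^ (1-p) * x ^ p) 0 := by
      have c1 : ContinuousAt (fun x : ℝ => x ^ (1-p)) 0 :=
        Real.continuousAt_rpow_const 0 (1-p) (Or.inr (by linarith : (0:ℝ) ≤ 1 - p))
      have c2 : ContinuousAt (fun x : ℝ => x ^ p) 0 :=
        Real.continuousAt_rpow_const 0 p (Or.inr hp0.le)
      have cl : ContinuousAt (fun x : ℝ => (1:ℝ) - x) 0 := by fun_prop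
      have c3 : ContinuousAt (fun x : ℝ => (1-x) ^ p) 0 := by
        have h : ContinuousAt (fun y : ℝ => y ^ p) ((fun x : ℝ => (1:ℝ) - x) 0) :=
          Real.continuousAt_rpow_const _ p (Or.inl (by norm_num))
        exact h.comp cl
      have c4 : ContinuousAt (fun x : ℝ => (1-x) ^ (1-p)) 0 := by
        have h : ContinuousAt (fun y : ℝ => y ^ (1-p)) ((fun x : ℝ => (1:ℝ) - x) 0) :=
          Real.continuousAt_rpow_const _ (1-p) (Or.inl (by norm_num))
        exact h.comp cl
      exact ((c1.mul c3).add (c4.mul c2))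
    have h0 : (0:ℝ) ^ (1-p) * (1-0) ^ p + (1-0) ^ (1-p) * (0:ℝ) ^ p = 0 := by
      rw [Real.zero_rpow (by linarith : 1 - p ≠ 0), Real.zero_rpow hp0.ne']; ring
    have h := (hcont.tendsto.comp htend)
    rw [h0] at h
    exact h
end

section
/- Let d ≥ 2, 0 < b ≤ 1, R > 0, and let E be the ellipse {x ∈ ℝ^d : x_1² + (x_2/b)² = R², x_i = 0 for i ≥ 3}. For r > 0, define the pseudo-ring PR_r^E = {x ∈ ℝ^d : (√(x_1² + (x_2/b)²) − R)² + Σ_{i=3}^d x_i² ≤ r²}. Then D(E, br) ⊆ PR_r^E ⊆ D(E, r), where D(E, s) denotes the closed s-neighbourhood {x : dist(x, E) ≤ s} of E. -/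
set_option maxHeartbeats 1000000

theorem stmt_4 (d : ℕ) (hd : 2 ≤ d) (b R r : ℝ)
    (hb0 : 0 < b) (hb1 : b ≤ 1) (hR : 0 < R) (hr : 0 < r)
    (E PR : Set (EuclideanSpace ℝ (Fin d)))
    (hE : E = {x | x ⟨0, by omega⟩ ^ 2 + (x ⟨1, by omega⟩ / b) ^ 2 = R ^ 2 ∧
      ∀ i : Fin d, 2 ≤ (i : ℕ) → x i = 0})
    (hPR : PR = {x |
      (Real.sqrt (x ⟨0, by omega⟩ ^ 2 + (x ⟨1, by omega⟩ / b) ^ 2) - R) ^ 2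
        + ∑ i ∈ Finset.univ.filter (fun i : Fin d => 2 ≤ (i : ℕ)), x i ^ 2 ≤ r ^ 2}) :
    {x | Metric.infDist x E ≤ b * r} ⊆ PR ∧ PR ⊆ {x | Metric.infDist x E ≤ r} := by
  have h0 : (0:ℕ) < d := by omega
  have h1 : (1:ℕ) < d := by omega
  set i0 : Fin d := ⟨0, h0⟩ with hi0
  set i1 : Fin d := ⟨1, h1⟩ with hi1
  have hne : i0 ≠ i1 := by simp [hi0, hi1, Fin.ext_iff]
  -- helper : s^2 ≤ t^2, 0 ≤ t → s ≤ t
  have sqle : ∀ s t : ℝ, 0 ≤ t → s ^ 2 ≤ t ^ 2 → s ≤ t := by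
    intro s t ht h
    nlinarith [sq_nonneg (s - t), sq_nonneg (s + t)]
  -- sum splitting
  have hsplit : ∀ f : Fin d → ℝ, ∑ i, f i
      = f i0 + f i1 + ∑ i ∈ Finset.univ.filter (fun i : Fin d => 2 ≤ (i : ℕ)), f i := by
    intro f
    have hset : Finset.univ.filter (fun i : Fin d => ¬ 2 ≤ (i : ℕ)) = {i0, i1} := by
      ext i
      simp only [Finset.mem_filter, Finset.mem_univ, true_and, Finset.mem_insert,
        Finset.mem_singleton, Fin.ext_iff, hi0, hi1]
      omega
    rw [← Finset.sum_filter_add_sum_filter_not Finset.univ (fun i : Fin d => 2 ≤ (i : ℕ)) f,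
      hset, Finset.sum_pair hne]
    ring
  have hdist : ∀ x y : EuclideanSpace ℝ (Fin d), dist x y ^ 2
      = (x i0 - y i0) ^ 2 + (x i1 - y i1) ^ 2
        + ∑ i ∈ Finset.univ.filter (fun i : Fin d => 2 ≤ (i : ℕ)), (x i - y i) ^ 2 := by
    intro x y
    have : dist x y = Real.sqrt (∑ i, (x i - y i) ^ 2) := by
      rw [EuclideanSpace.dist_eq]
      congr 1
      apply Finset.sum_congr rfl
      intro i _
      rw [Real.dist_eq, sq_abs]
    rw [this, Real.sq_sqrt (Finset.sum_nonneg fun i _ => sq_nonneg _)]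
    exact hsplit _
  -- base point of the ellipse
  set e0 : EuclideanSpace ℝ (Fin d) := WithLp.toLp 2 (fun i : Fin d => if (i : ℕ) = 0 then R else 0) with he0def
  have he0i0 : e0 i0 = R := by
    show (if ((i0 : Fin d) : ℕ) = 0 then R else 0) = R
    rw [hi0]
    norm_num
  have he0i1 : e0 i1 = 0 := by
    show (if ((i1 : Fin d) : ℕ) = 0 then R else 0) = 0
    rw [hi1]
    norm_num
  have he0hi : ∀ i : Fin d, 2 ≤ (i : ℕ) → e0 i = 0 := by
    intro i hi
    show (if ((i : Fin d) : ℕ) = 0 then R else 0) = 0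
    rw [if_neg (by omega)]
  have he0E : e0 ∈ E := by
    rw [hE]
    refine ⟨?_, he0hi⟩
    show e0 i0 ^ 2 + (e0 i1 / b) ^ 2 = R ^ 2
    rw [he0i0, he0i1]
    simp
  have hEne : E.Nonempty := ⟨e0, he0E⟩
  constructor
  · -- D(E, br) ⊆ PR
    intro x hx
    simp only [Set.mem_setOf_eq] at hx
    rw [hPR]
    show (Real.sqrt (x i0 ^ 2 + (x i1 / b) ^ 2) - R) ^ 2
        + ∑ i ∈ Finset.univ.filter (fun i : Fin d => 2 ≤ (i : ℕ)), x i ^ 2 ≤ r ^ 2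
    set a := x i0 with ha
    set c := x i1 with hc
    set ρ := Real.sqrt (a ^ 2 + (c / b) ^ 2) with hρdef
    have hρnn : 0 ≤ ρ := Real.sqrt_nonneg _
    have hρ2 : ρ ^ 2 = a ^ 2 + (c / b) ^ 2 := Real.sq_sqrt (by positivity)
    set S := ∑ i ∈ Finset.univ.filter (fun i : Fin d => 2 ≤ (i : ℕ)), x i ^ 2 with hS
    have hSnn : 0 ≤ S := Finset.sum_nonneg fun i _ => sq_nonneg _
    set T := (ρ - R) ^ 2 + S with hT
    have hTnn : 0 ≤ T := by positivity
    have key : ∀ y ∈ E, b * Real.sqrt T ≤ dist x y := by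
      intro y hy
      rw [hE] at hy
      obtain ⟨hy1, hy2⟩ := hy
      have hy1' : y i0 ^ 2 + (y i1 / b) ^ 2 = R ^ 2 := hy1
      have hd2 : dist x y ^ 2 = (a - y i0) ^ 2 + (c - y i1) ^ 2 + S := by
        rw [hdist x y, hS]
        congr 1
        apply Finset.sum_congr rfl
        intro i hi
        rw [hy2 i (Finset.mem_filter.mp hi).2, sub_zero]
      set u := c / b with hu
      set v := y i1 / b with hv
      have hcu : c = u * b := by rw [hu, div_mul_cancel₀ _ hb0.ne']
      have hyv : y i1 = v * b := by rw [hv, div_mul_cancel₀ _ hb0.ne']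
      have hCS : a * y i0 + u * v ≤ ρ * R := by
        have h2 : (a * y i0 + u * v) ^ 2 ≤ (ρ * R) ^ 2 := by
          have hsq : (ρ * R) ^ 2 = (a ^ 2 + u ^ 2) * (y i0 ^ 2 + v ^ 2) := by
            rw [mul_pow, hρ2, hy1']
          have hlag : (a ^ 2 + u ^ 2) * (y i0 ^ 2 + v ^ 2) - (a * y i0 + u * v) ^ 2
              = (a * v - u * y i0) ^ 2 := by ring
          nlinarith [sq_nonneg (a * v - u * y i0), hlag, hsq]
        exact sqle _ _ (mul_nonneg hρnn hR.le) h2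
      have hmain : b ^ 2 * T ≤ dist x y ^ 2 := by
        rw [hd2, hT]
        have hb2 : b ^ 2 ≤ 1 := by nlinarith
        have hS' : b ^ 2 * S ≤ S := mul_le_of_le_one_left hSnn hb2
        have h2d : b ^ 2 * (ρ - R) ^ 2 ≤ (a - y i0) ^ 2 + (c - y i1) ^ 2 := by
          rw [hcu, hyv]
          have h1b : 0 ≤ (1 - b ^ 2) * (a - y i0) ^ 2 :=
            mul_nonneg (by linarith) (sq_nonneg _)
          have t2 : 0 ≤ 2 * b ^ 2 * (ρ * R - (a * y i0 + u * v)) :=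
            mul_nonneg (by positivity) (sub_nonneg.mpr hCS)
          have z1 : b ^ 2 * ((a ^ 2 + u ^ 2) - ρ ^ 2) = 0 := by rw [hρ2]; ring
          have z2 : b ^ 2 * ((y i0 ^ 2 + v ^ 2) - R ^ 2) = 0 := by rw [hy1']; ring
          have expand : (a - y i0) ^ 2 + (u * b - v * b) ^ 2 - b ^ 2 * (ρ - R) ^ 2
              = (1 - b ^ 2) * (a - y i0) ^ 2 + 2 * b ^ 2 * (ρ * R - (a * y i0 + u * v))
                + b ^ 2 * ((a ^ 2 + u ^ 2) - ρ ^ 2) + b ^ 2 * ((y i0 ^ 2 + v ^ 2) - R ^ 2) := by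
            ring
          linarith [expand, h1b, t2, z1, z2]
        calc b ^ 2 * ((ρ - R) ^ 2 + S) = b ^ 2 * (ρ - R) ^ 2 + b ^ 2 * S := by ring
          _ ≤ (a - y i0) ^ 2 + (c - y i1) ^ 2 + S := by linarith
      have hbT : b * Real.sqrt T = Real.sqrt (b ^ 2 * T) := by
        rw [Real.sqrt_mul (sq_nonneg b), Real.sqrt_sq hb0.le]
      rw [hbT]
      calc Real.sqrt (b ^ 2 * T) ≤ Real.sqrt (dist x y ^ 2) := Real.sqrt_le_sqrt hmain
        _ = dist x y := Real.sqrt_sq dist_nonneg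
    -- conclude
    by_contra hcon
    push_neg at hcon
    have hTr : r < Real.sqrt T := by
      have := Real.sqrt_lt_sqrt (by positivity) hcon
      rwa [Real.sqrt_sq hr.le] at this
    have hlt : Metric.infDist x E < b * Real.sqrt T := by
      calc Metric.infDist x E ≤ b * r := hx
        _ < b * Real.sqrt T := by exact (mul_lt_mul_iff_right₀ hb0).mpr hTr
    obtain ⟨y, hyE, hylt⟩ := (Metric.infDist_lt_iff hEne).mp hlt
    exact absurd (key y hyE) (not_le.mpr hylt)
  · -- PR ⊆ D(E,r)
    intro x hx
    rw [hPR] at hx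
    have hx' : (Real.sqrt (x i0 ^ 2 + (x i1 / b) ^ 2) - R) ^ 2
        + ∑ i ∈ Finset.univ.filter (fun i : Fin d => 2 ≤ (i : ℕ)), x i ^ 2 ≤ r ^ 2 := hx
    simp only [Set.mem_setOf_eq]
    set a := x i0 with ha
    set c := x i1 with hc
    set ρ := Real.sqrt (a ^ 2 + (c / b) ^ 2) with hρdef
    have hρnn : 0 ≤ ρ := Real.sqrt_nonneg _
    have hρ2 : ρ ^ 2 = a ^ 2 + (c / b) ^ 2 := Real.sq_sqrt (by positivity)
    set S := ∑ i ∈ Finset.univ.filter (fun i : Fin d => 2 ≤ (i : ℕ)), x i ^ 2 with hS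
    have hSnn : 0 ≤ S := Finset.sum_nonneg fun i _ => sq_nonneg _
    by_cases hρ0 : ρ = 0
    · -- degenerate case: x₁ = x₂ = 0
      have hle0 : a ^ 2 + (c / b) ^ 2 ≤ 0 := by
        have := hρ2; rw [hρ0] at this; nlinarith
      have ha0 : a = 0 := by nlinarith [sq_nonneg a, sq_nonneg (c / b)]
      have hcb0 : (c / b) ^ 2 = 0 := by nlinarith [sq_nonneg a, sq_nonneg (c / b)]
      have hc0 : c = 0 := by
        have : c / b = 0 := by
          have := pow_eq_zero_iff (n := 2) (by norm_num) |>.mp hcb0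
          exact this
        field_simp at this
        simpa using this
      have hdle : dist x e0 ^ 2 ≤ r ^ 2 := by
        have : dist x e0 ^ 2 = (a - R) ^ 2 + (c - 0) ^ 2 + S := by
          rw [hdist x e0, he0i0, he0i1, hS]
          congr 1
          apply Finset.sum_congr rfl
          intro i hi
          rw [he0hi i (Finset.mem_filter.mp hi).2, sub_zero]
        rw [this, ha0, hc0]
        have hxg : (ρ - R) ^ 2 + S ≤ r ^ 2 := hx'
        rw [hρ0] at hxg
        nlinarith
      calc Metric.infDist x E ≤ dist x e0 := Metric.infDist_le_dist_of_mem he0E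
        _ ≤ r := sqle _ _ hr.le hdle
    · have hρpos : 0 < ρ := lt_of_le_of_ne hρnn (Ne.symm hρ0)
      set y : EuclideanSpace ℝ (Fin d) :=
        WithLp.toLp 2 (fun i : Fin d => if (i : ℕ) = 0 then R * a / ρ else if (i : ℕ) = 1 then R * c / ρ else 0)
        with hydef
      have hyi0 : y i0 = R * a / ρ := by
        show (if ((i0 : Fin d) : ℕ) = 0 then R * a / ρ
          else if ((i0 : Fin d) : ℕ) = 1 then R * c / ρ else 0) = R * a / ρ
        rw [hi0]
        norm_num
      have hyi1 : y i1 = R * c / ρ := by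
        show (if ((i1 : Fin d) : ℕ) = 0 then R * a / ρ
          else if ((i1 : Fin d) : ℕ) = 1 then R * c / ρ else 0) = R * c / ρ
        rw [hi1]
        norm_num
      have hyhi : ∀ i : Fin d, 2 ≤ (i : ℕ) → y i = 0 := by
        intro i hi
        show (if ((i : Fin d) : ℕ) = 0 then R * a / ρ
          else if ((i : Fin d) : ℕ) = 1 then R * c / ρ else 0) = 0
        rw [if_neg (by omega), if_neg (by omega)]
      have hyE : y ∈ E := by
        rw [hE]
        refine ⟨?_, hyhi⟩
        show y i0 ^ 2 + (y i1 / b) ^ 2 = R ^ 2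
        rw [hyi0, hyi1]
        have : (R * a / ρ) ^ 2 + (R * c / ρ / b) ^ 2 = (R / ρ) ^ 2 * (a ^ 2 + (c / b) ^ 2) := by
          field_simp
        rw [this, ← hρ2]
        field_simp
      have hcsq : c ^ 2 ≤ (c / b) ^ 2 := by
        rw [div_pow, le_div_iff₀ (by positivity)]
        have hb2 : b ^ 2 ≤ 1 := by nlinarith
        nlinarith [mul_nonneg (sq_nonneg c) (sub_nonneg.mpr hb2)]
      have hsum : a ^ 2 + c ^ 2 ≤ ρ ^ 2 := by rw [hρ2]; linarith
      have hdle : dist x y ^ 2 ≤ r ^ 2 := by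
        have hdd : dist x y ^ 2 = (a - R * a / ρ) ^ 2 + (c - R * c / ρ) ^ 2 + S := by
          rw [hdist x y, hyi0, hyi1, hS]
          congr 1
          apply Finset.sum_congr rfl
          intro i hi
          rw [hyhi i (Finset.mem_filter.mp hi).2, sub_zero]
        have e1 : (a - R * a / ρ) ^ 2 + (c - R * c / ρ) ^ 2
            = (a ^ 2 + c ^ 2) * ((ρ - R) / ρ) ^ 2 := by
          field_simp
        have e2 : (a ^ 2 + c ^ 2) * ((ρ - R) / ρ) ^ 2 ≤ ρ ^ 2 * ((ρ - R) / ρ) ^ 2 :=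
          mul_le_mul_of_nonneg_right hsum (sq_nonneg _)
        have e3 : ρ ^ 2 * ((ρ - R) / ρ) ^ 2 = (ρ - R) ^ 2 := by
          rw [div_pow]
          field_simp
        have hxg : (ρ - R) ^ 2 + S ≤ r ^ 2 := hx'
        rw [hdd]
        calc (a - R * a / ρ) ^ 2 + (c - R * c / ρ) ^ 2 + S
            ≤ ρ ^ 2 * ((ρ - R) / ρ) ^ 2 + S := by rw [e1]; linarith
          _ = (ρ - R) ^ 2 + S := by rw [e3]
          _ ≤ r ^ 2 := hxg
      calc Metric.infDist x E ≤ dist x y := Metric.infDist_le_dist_of_mem hyE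
        _ ≤ r := sqle _ _ hr.le hdle
end

section
/- With T = T^{σ,r,s} as defined (σ = [−1,1]^d, A = (1−s)/(1−r)), the Jacobian determinant of T equals s/r at every point in the interior of the sup-norm ball {‖x‖_∞ < r^{1/d}}, and equals (1−s)/(1−r) at every point of the interior of σ exterior to that ball at which T is differentiable (i.e., off the diagonal set where two coordinates have equal maximal absolute value). -/
lemma det_aux (d : ℕ) (a b : ℝ) (x : Fin d → ℝ) (i : Fin d) (ha : a ≠ 0) :
    (a • ContinuousLinearMap.id ℝ (Fin d → ℝ)
      + (b • (ContinuousLinearMap.proj i : (Fin d → ℝ) →L[ℝ] ℝ)).smulRight x).det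
      = a ^ d * (1 + b / a * x i) := by
  rw [ContinuousLinearMap.det]
  rw [← LinearMap.det_toMatrix (Pi.basisFun ℝ (Fin d))]
  simp only [ContinuousLinearMap.coe_add, ContinuousLinearMap.coe_smul]
  have hM : (LinearMap.toMatrix (Pi.basisFun ℝ (Fin d)) (Pi.basisFun ℝ (Fin d)))
      (a • ((ContinuousLinearMap.id ℝ (Fin d → ℝ) : (Fin d → ℝ) →L[ℝ] (Fin d → ℝ)) :
        (Fin d → ℝ) →ₗ[ℝ] (Fin d → ℝ))
       + (((b • (ContinuousLinearMap.proj i : (Fin d → ℝ) →L[ℝ] ℝ)).smulRight x :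
          (Fin d → ℝ) →L[ℝ] (Fin d → ℝ)) : (Fin d → ℝ) →ₗ[ℝ] (Fin d → ℝ)))
      = a • (1 + Matrix.replicateCol Unit (fun j => b / a * x j)
          * Matrix.replicateRow Unit (Pi.single i 1 : Fin d → ℝ)) := by
    ext j k
    rw [LinearMap.toMatrix_apply]
    simp only [Pi.basisFun_apply, LinearMap.add_apply, LinearMap.smul_apply,
      ContinuousLinearMap.coe_coe, ContinuousLinearMap.id_apply,
      ContinuousLinearMap.smulRight_apply, ContinuousLinearMap.smul_apply,
      ContinuousLinearMap.proj_apply, Pi.basisFun_repr, Pi.add_apply, Pi.smul_apply,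
      Matrix.smul_apply, Matrix.add_apply, Matrix.one_apply, Matrix.mul_apply,
      Matrix.replicateCol_apply, Matrix.replicateRow_apply, Finset.sum_const, Finset.card_univ,
      Fintype.card_unit, one_smul, smul_eq_mul]
    by_cases h : j = k <;> by_cases h' : i = k <;>
      simp [h, h', Pi.single_apply] <;> field_simp <;> ring
  rw [hM, Matrix.det_smul, Matrix.det_one_add_replicateCol_mul_replicateRow]
  simp [dotProduct, Pi.single_apply]


theorem stmt_11 (d : ℕ) (hd : 0 < d) (r s : ℝ)
    (hr : r ∈ Set.Ioo (0 : ℝ) 1) (hs : s ∈ Set.Ioo (0 : ℝ) 1)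
    (A : ℝ) (hA : A = (1 - s) / (1 - r))
    (T : (Fin d → ℝ) → Fin d → ℝ)
    (hT : ∀ x : Fin d → ℝ, T x =
      if ‖x‖ ≤ r ^ ((1 : ℝ) / d) then (s / r) ^ ((1 : ℝ) / d) • x
      else ((A * ‖x‖ ^ d + 1 - A) ^ ((1 : ℝ) / d) / ‖x‖) • x) :
    (∀ x : Fin d → ℝ, ‖x‖ < r ^ ((1 : ℝ) / d) → (fderiv ℝ T x).det = s / r) ∧
      (∀ x : Fin d → ℝ, r ^ ((1 : ℝ) / d) < ‖x‖ → ‖x‖ < 1 →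
        (∃! i : Fin d, |x i| = ‖x‖) →
        (fderiv ℝ T x).det = (1 - s) / (1 - r)) := by
  constructor
  · intro x hx
    set c : ℝ := (s / r) ^ ((1 : ℝ) / d) with hc
    have hev : T =ᶠ[nhds x] fun y => c • y := by
      have h1 : ∀ᶠ y in nhds x, ‖y‖ < r ^ ((1 : ℝ) / d) :=
        (continuous_norm.tendsto x).eventually_lt_const hx
      filter_upwards [h1] with y hy
      rw [hT y, if_pos hy.le]
    have hF : HasFDerivAt (fun y : Fin d → ℝ => c • y)
        (c • ContinuousLinearMap.id ℝ (Fin d → ℝ)) x := (hasFDerivAt_id x).const_smul c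
    rw [hev.fderiv_eq, hF.fderiv]
    rw [ContinuousLinearMap.det]
    simp only [ContinuousLinearMap.coe_smul, ContinuousLinearMap.coe_id]
    rw [LinearMap.det_smul, LinearMap.det_id, mul_one, Module.finrank_pi,
      Fintype.card_fin]
    rw [← Real.rpow_natCast c d, hc, ← Real.rpow_mul (div_nonneg hs.1.le hr.1.le)]
    rw [one_div, inv_mul_cancel₀ (by exact_mod_cast hd.ne'), Real.rpow_one]
  · intro x hrx hx1 hex
    obtain ⟨i, hi, huniq⟩ := hex
    have hdR : (0:ℝ) < d := by exact_mod_cast hd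
    have hrpos : (0:ℝ) < r ^ ((1:ℝ)/d) := Real.rpow_pos_of_pos hr.1 _
    have hn0 : (0:ℝ) < ‖x‖ := hrpos.trans hrx
    have hA0 : 0 < A := by rw [hA]; exact div_pos (by linarith [hs.2]) (by linarith [hr.2])
    set ε : ℝ := if 0 ≤ x i then 1 else -1 with hε
    have hεpm : ε = 1 ∨ ε = -1 := by unfold ε; split <;> simp
    have hε2 : ε * ε = 1 := by rcases hεpm with h | h <;> rw [h] <;> norm_num
    have hεne : ε ≠ 0 := by rcases hεpm with h | h <;> rw [h] <;> norm_num
    have hεabs : ∀ t : ℝ, |ε * t| = |t| := by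
      intro t; rcases hεpm with h | h <;> rw [h] <;> simp
    have hnx : ε * x i = ‖x‖ := by
      rw [← hi]; unfold ε; split
      · rw [one_mul, abs_of_nonneg ‹_›]
      · rw [neg_one_mul, abs_of_neg (by linarith [not_le.1 ‹¬0 ≤ x i›])]
    have hxi0 : x i ≠ 0 := by
      intro h; rw [h, mul_zero] at hnx; exact hn0.ne hnx
    -- the local model
    set B : ℝ → ℝ := fun t => A * (ε * t) ^ d + 1 - A with hBdef
    set φ : ℝ → ℝ := fun t => ε * (B t) ^ ((1:ℝ)/d) with hφdef
    set g : ℝ → ℝ := fun t => φ t / t with hgdef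
    -- division helper
    have hdiv : ∀ c u : ℝ, c / (ε * u) = ε * c / u := by
      intro c u; rcases hεpm with h | h <;> rw [h] <;> [skip; rw [neg_one_mul, div_neg]] <;> ring_nf
    -- eventual equality
    have hev : T =ᶠ[nhds x] fun y => g (y i) • y := by
      have e1 : ∀ᶠ y in nhds x, r ^ ((1:ℝ)/d) < ε * y i := by
        exact Filter.Tendsto.eventually_const_lt (v := ε * x i) (by rw [hnx]; exact hrx)
          ((continuous_const.mul (continuous_apply i)).tendsto x)
      have e2 : ∀ᶠ y in nhds x, ∀ j, j ≠ i → |y j| < ε * y i := by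
        rw [Filter.eventually_all]
        intro j
        by_cases hj : j = i
        · exact Filter.Eventually.of_forall fun y h => absurd hj h
        · have hlt : |x j| < ε * x i := by
            rw [hnx]
            exact lt_of_le_of_ne (by simpa using norm_le_pi_norm x j)
              (fun h => hj (huniq j h))
          have := ContinuousAt.eventually_lt
            (f := fun y : Fin d → ℝ => |y j|) (g := fun y => ε * y i) (x₀ := x)
            ((continuous_apply j).abs.continuousAt)
            ((continuous_const.mul (continuous_apply i)).continuousAt) hlt
          filter_upwards [this] with y hy _
          exact hy
      filter_upwards [e1, e2] with y h1 h2
      have hyi : 0 < ε * y i := hrpos.trans h1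
      have habs : |y i| = ε * y i := by rw [← hεabs (y i)]; exact abs_of_pos hyi
      have hnorm : ‖y‖ = ε * y i := by
        refine le_antisymm ?_ ?_
        · rw [pi_norm_le_iff_of_nonneg hyi.le]
          intro j
          rcases eq_or_ne j i with h | h
          · rw [h, Real.norm_eq_abs, habs]
          · exact (h2 j h).le
        · rw [← habs]; simpa using norm_le_pi_norm y i
      rw [hT y, if_neg (not_le.2 (by rw [hnorm]; exact h1))]
      rw [hnorm, hgdef, hφdef, hBdef]
      simp only []
      rw [hdiv]
    -- derivatives
    have hB0 : 0 < B (x i) := by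
      have hrn : r < ‖x‖ ^ d := by
        calc r = (r ^ ((1:ℝ)/d)) ^ d := by
              rw [← Real.rpow_natCast (r ^ ((1:ℝ)/d)) d, ← Real.rpow_mul hr.1.le,
                one_div, inv_mul_cancel₀ (by exact_mod_cast hd.ne'), Real.rpow_one]
          _ < ‖x‖ ^ d := by
              apply pow_lt_pow_left₀ hrx hrpos.le
              exact_mod_cast hd.ne'
      have : s < A * ‖x‖ ^ d + 1 - A := by
        have h1 : A * r + 1 - A = s := by
          have hrn1 : (1:ℝ) - r ≠ 0 := by linarith [hr.2]
          rw [hA]; field_simp; ring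
        nlinarith
      rw [hBdef]; simp only []
      rw [hnx]; linarith [hs.1]
    have hBd : HasDerivAt B (A * (↑d * (ε * x i) ^ (d-1) * ε)) (x i) := by
      have h0 : HasDerivAt (fun t : ℝ => ε * t) ε (x i) := by
        simpa using (hasDerivAt_id (x i)).const_mul ε
      exact (((h0.pow d).const_mul A).add_const 1).sub_const A
    have hφd : HasDerivAt φ
        (ε * (A * (↑d * (ε * x i) ^ (d-1) * ε) * ((1:ℝ)/d) * (B (x i)) ^ ((1:ℝ)/d - 1)))
        (x i) := (hBd.rpow_const (Or.inl hB0.ne')).const_mul ε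
    set φ' : ℝ := ε * (A * (↑d * (ε * x i) ^ (d-1) * ε) * ((1:ℝ)/d) * (B (x i)) ^ ((1:ℝ)/d - 1))
      with hφ'def
    set dg : ℝ := (φ' * x i - φ (x i) * 1) / (x i) ^ 2 with hdgdef
    have hgd : HasDerivAt g dg (x i) := hφd.div (hasDerivAt_id (x i)) hxi0
    have hproj : HasFDerivAt (fun y : Fin d → ℝ => y i)
        (ContinuousLinearMap.proj i : (Fin d → ℝ) →L[ℝ] ℝ) x :=
      (ContinuousLinearMap.proj i : (Fin d → ℝ) →L[ℝ] ℝ).hasFDerivAt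
    have hGi : HasFDerivAt (fun y : Fin d → ℝ => g (y i))
        (dg • (ContinuousLinearMap.proj i : (Fin d → ℝ) →L[ℝ] ℝ)) x :=
      (hgd.comp_hasFDerivAt x hproj :)
    have hG : HasFDerivAt (fun y : Fin d → ℝ => g (y i) • y)
        (g (x i) • ContinuousLinearMap.id ℝ (Fin d → ℝ)
          + (dg • (ContinuousLinearMap.proj i : (Fin d → ℝ) →L[ℝ] ℝ)).smulRight x) x :=
      hGi.smul (hasFDerivAt_id x)
    have hc0 : (0:ℝ) < (B (x i)) ^ ((1:ℝ)/d) := Real.rpow_pos_of_pos hB0 _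
    have ha : g (x i) ≠ 0 := by
      rw [hgdef]; simp only []
      exact div_ne_zero (mul_ne_zero hεne hc0.ne') hxi0
    rw [hev.fderiv_eq, hG.fderiv, det_aux d (g (x i)) dg x i ha, ← hA]
    -- final arithmetic
    have hgx : g (x i) = B (x i) ^ ((1:ℝ)/d) / ‖x‖ := by
      rw [hgdef]; simp only []
      rw [hφdef]; simp only []
      rw [← hdiv, hnx]
    have key : g (x i) ^ d * (1 + dg / g (x i) * x i)
        = g (x i) ^ (d-1) * (g (x i) + dg * x i) := by
      have hdd : d = (d-1)+1 := (Nat.succ_pred_eq_of_pos hd).symm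
      rw [hdd, pow_succ, Nat.add_sub_cancel]
      field_simp
    rw [key]
    have hsum : g (x i) + dg * x i = φ' := by
      rw [hdgdef, hgdef]; simp only []
      field_simp
      ring
    have hφ'val : φ' = A * ‖x‖ ^ (d-1) * B (x i) ^ ((1:ℝ)/d - 1) := by
      rw [hφ'def, hnx]
      rcases hεpm with h | h <;> rw [h] <;> field_simp <;> ring
    have hcpow : (B (x i) ^ ((1:ℝ)/d)) ^ (d-1)
        = B (x i) ^ (((1:ℝ)/d) * ((d-1:ℕ):ℝ)) := by
      rw [Real.rpow_mul hB0.le, Real.rpow_natCast]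
    have hBmul : B (x i) ^ (((1:ℝ)/d) * ((d-1:ℕ):ℝ)) * B (x i) ^ ((1:ℝ)/d - 1) = 1 := by
      rw [← Real.rpow_add hB0]
      have hcast : ((d-1:ℕ):ℝ) = (d:ℝ) - 1 := by
        rw [Nat.cast_sub hd]; norm_num
      have hz : ((1:ℝ)/d) * ((d-1:ℕ):ℝ) + ((1:ℝ)/d - 1) = 0 := by
        rw [hcast]; field_simp; ring
      rw [hz, Real.rpow_zero]
    rw [hsum, hφ'val, hgx, div_pow, hcpow]
    have hnn : ‖x‖ ^ (d-1) ≠ 0 := pow_ne_zero _ hn0.ne'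
    have h2 : B (x i) ^ ((1:ℝ)/↑d * ((d-1:ℕ):ℝ)) * (A * ‖x‖ ^ (d-1) * B (x i) ^ ((1:ℝ)/↑d - 1))
        = A * ‖x‖ ^ (d-1) := by
      linear_combination (A * ‖x‖ ^ (d-1)) * hBmul
    rw [div_mul_eq_mul_div, h2, mul_div_assoc, div_self hnn, mul_one]
end

section
/- With T = T^{σ,r,s} as above and r < s, all partial derivatives of T at points x with ‖x‖_∞ > r^{1/d} (where T is differentiable) are bounded in absolute value by (s/r)^{1/d}; if instead s < r, they are bounded by ((1−s)r/((1−r)s))·(s/r)^{1/d}. In particular T is Lipschitz on [−1,1]^d. -/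
open Real Set Filter
set_option linter.unusedSectionVars false
set_option maxHeartbeats 1000000

namespace SftHelper



lemma p3 (ψ : ℝ → ℝ) (K : ℝ)
    (hmono : Monotone ψ ∨ Antitone ψ)
    (hψ0 : ∀ t, 0 ≤ ψ t) (hψK : ∀ t, 0 ≤ t → ψ t ≤ K)
    (hρlip : ∀ u v : ℝ, 0 ≤ v → v ≤ u → |ψ u * u - ψ v * v| ≤ K * (u - v))
    (hρmono : ∀ u v : ℝ, 0 ≤ v → v ≤ u → ψ v * v ≤ ψ u * u)
    {u v w : ℝ} (hv : 0 ≤ v) (hvu : v ≤ u) (hw : |w| ≤ v) :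
    |(ψ u - ψ v) * w| ≤ K * (u - v) := by
  have hu : 0 ≤ u := hv.trans hvu
  have habs : |(ψ u - ψ v) * w| = |ψ u - ψ v| * |w| := abs_mul _ _
  have hw0 : 0 ≤ |w| := abs_nonneg w
  rcases hmono with hm | hm
  · have h1 : ψ v ≤ ψ u := hm hvu
    have h2 : |ψ u - ψ v| = ψ u - ψ v := abs_of_nonneg (by linarith)
    have h3 : |ψ u - ψ v| * |w| ≤ (ψ u - ψ v) * v := by
      rw [h2]; exact mul_le_mul_of_nonneg_left hw (by linarith)
    have h4 := hρlip u v hv hvu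
    have h5 : ψ u * u - ψ v * v ≤ K * (u - v) := (le_abs_self _).trans h4
    have h6 : 0 ≤ ψ u * (u - v) := mul_nonneg (hψ0 u) (by linarith)
    nlinarith
  · have h1 : ψ u ≤ ψ v := hm hvu
    have h2 : |ψ u - ψ v| = ψ v - ψ u := by
      rw [abs_of_nonpos (by linarith)]; ring
    have h3 : |ψ u - ψ v| * |w| ≤ (ψ v - ψ u) * v := by
      rw [h2]; exact mul_le_mul_of_nonneg_left hw (by linarith)
    have h4 := hρmono u v hv hvu
    have h5 : ψ u * (u - v) ≤ K * (u - v) :=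
      mul_le_mul_of_nonneg_right (hψK u hu) (by linarith)
    nlinarith

lemma oneD (ψ : ℝ → ℝ) (K : ℝ)
    (hψ0 : ∀ t, 0 ≤ ψ t) (hψK : ∀ t, 0 ≤ t → ψ t ≤ K)
    (hρlip : ∀ u v : ℝ, 0 ≤ v → v ≤ u → |ψ u * u - ψ v * v| ≤ K * (u - v))
    {m : ℝ} (hm : 0 ≤ m) (p q : ℝ) :
    |ψ (max |p| m) * p - ψ (max |q| m) * q| ≤ K * |p - q| := by
  have hK : 0 ≤ K := (hψ0 0).trans (hψK 0 le_rfl)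
  set F : ℝ → ℝ := fun t => ψ (max |t| m) * t with hF
  have hFR : ∀ t : ℝ, m ≤ t → F t = ψ t * t := by
    intro t ht
    have h0 : 0 ≤ t := hm.trans ht
    simp only [hF, abs_of_nonneg h0, max_eq_left ht]
  have hFM : ∀ t : ℝ, |t| ≤ m → F t = ψ m * t := by
    intro t ht; simp only [hF, max_eq_right ht]
  have hFL : ∀ t : ℝ, t ≤ -m → F t = ψ (-t) * t := by
    intro t ht
    have h1 : |t| = -t := abs_of_nonpos (by linarith)
    have h2 : m ≤ -t := by linarith
    simp only [hF, h1, max_eq_left h2]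
  have hR : ∀ p q : ℝ, m ≤ q → q ≤ p → |F p - F q| ≤ K * (p - q) := by
    intro p q hq hqp
    rw [hFR p (hq.trans hqp), hFR q hq]
    exact hρlip p q (hm.trans hq) hqp
  have hM : ∀ p q : ℝ, |p| ≤ m → |q| ≤ m → q ≤ p → |F p - F q| ≤ K * (p - q) := by
    intro p q hp hq hqp
    rw [hFM p hp, hFM q hq, ← mul_sub, abs_mul, abs_of_nonneg (hψ0 m),
      abs_of_nonneg (by linarith : (0:ℝ) ≤ p - q)]
    exact mul_le_mul_of_nonneg_right (hψK m hm) (by linarith)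
  have hL : ∀ p q : ℝ, q ≤ p → p ≤ -m → |F p - F q| ≤ K * (p - q) := by
    intro p q hqp hp
    rw [hFL p hp, hFL q (hqp.trans hp)]
    have := hρlip (-q) (-p) (by linarith) (by linarith)
    calc |ψ (-p) * p - ψ (-q) * q| = |ψ (-q) * (-q) - ψ (-p) * (-p)| := by
          exact congrArg abs (by ring)
      _ ≤ K * (-q - -p) := this
      _ = K * (p - q) := by ring
  -- main
  suffices h : ∀ p q : ℝ, q ≤ p → |F p - F q| ≤ K * (p - q) by
    rcases le_total q p with hqp | hpq
    · rw [abs_of_nonneg (by linarith : (0:ℝ) ≤ p - q)]; exact h p q hqp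
    · rw [abs_sub_comm, abs_of_nonpos (by linarith : p - q ≤ 0)]
      calc |F q - F p| ≤ K * (q - p) := h q p hpq
        _ = K * -(p - q) := by ring
  intro p q hqp
  have hmm : |m| ≤ m := by rw [abs_of_nonneg hm]
  have hmm' : |(-m)| ≤ m := by rw [abs_neg, abs_of_nonneg hm]
  rcases le_total p (-m) with h1 | h1
  · exact hL p q hqp h1
  · rcases le_total q (-m) with h2 | h2
    · -- q ≤ -m ≤ p
      rcases le_total p m with h3 | h3
      · calc |F p - F q| ≤ |F p - F (-m)| + |F (-m) - F q| := abs_sub_le _ _ _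
          _ ≤ K * (p - -m) + K * (-m - q) :=
            add_le_add (hM p (-m) (abs_le.2 ⟨by linarith, h3⟩) hmm' h1) (hL (-m) q h2 le_rfl)
          _ = K * (p - q) := by ring
      · calc |F p - F q| ≤ |F p - F m| + |F m - F q| := abs_sub_le _ _ _
          _ ≤ |F p - F m| + (|F m - F (-m)| + |F (-m) - F q|) := by
              gcongr; exact abs_sub_le _ _ _
          _ ≤ K * (p - m) + (K * (m - -m) + K * (-m - q)) := by
              gcongr
              · exact hR p m le_rfl h3
              · exact hM m (-m) hmm hmm' (by linarith)
              · exact hL (-m) q h2 le_rfl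
          _ = K * (p - q) := by ring
    · -- -m ≤ q
      rcases le_total p m with h3 | h3
      · exact hM p q (abs_le.2 ⟨by linarith, h3⟩) (abs_le.2 ⟨h2, by linarith⟩) hqp
      · rcases le_total q m with h4 | h4
        · calc |F p - F q| ≤ |F p - F m| + |F m - F q| := abs_sub_le _ _ _
            _ ≤ K * (p - m) + K * (m - q) :=
              add_le_add (hR p m le_rfl h3) (hM m q hmm (abs_le.2 ⟨h2, h4⟩) h4)
            _ = K * (p - q) := by ring
        · exact hR p q h4 hqp

noncomputable def psi (d : ℕ) (r s A t : ℝ) : ℝ :=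
  if t ≤ r ^ ((1:ℝ)/d) then (s/r) ^ ((1:ℝ)/d) else (A * t^d + 1 - A) ^ ((1:ℝ)/d) / t

section facts
variable {d : ℕ} {r s A : ℝ} (hd : 0 < d) (hr : r ∈ Set.Ioo (0:ℝ) 1)
  (hs : s ∈ Set.Ioo (0:ℝ) 1) (hA : A = (1 - s) / (1 - r))

include hd hr hs hA

lemma hA0 : 0 < A := by
  rw [hA]; exact div_pos (by linarith [hs.2]) (by linarith [hr.2])

lemma ha0 : 0 < r ^ ((1:ℝ)/d) := rpow_pos_of_pos hr.1 _

lemma hdR : (d:ℝ) ≠ 0 := Nat.cast_ne_zero.2 hd.ne'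

lemma hapow : (r ^ ((1:ℝ)/d)) ^ d = r := by
  rw [← Real.rpow_natCast (r ^ ((1:ℝ)/d)) d, ← Real.rpow_mul hr.1.le,
    one_div, inv_mul_cancel₀ (hdR hd hr hs hA), Real.rpow_one]

lemma hQr : ∀ t : ℝ, (A * t^d + 1 - A) * r - s * t^d = ((r - s)/(1-r)) * (t^d - r) := by
  intro t
  have h1 : (1:ℝ) - r ≠ 0 := ne_of_gt (by linarith [hr.2])
  rw [hA]; field_simp; ring

lemma hQs : ∀ t : ℝ, r ^ ((1:ℝ)/d) ≤ t → s ≤ A * t^d + 1 - A := by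
  intro t ht
  have h1 : r ≤ t ^ d := by
    rw [← hapow hd hr hs hA]
    exact pow_le_pow_left₀ (ha0 hd hr hs hA).le ht d
  have h0 := hA0 hd hr hs hA
  have h2 : A * r + 1 - A = s := by
    have h1 : (1:ℝ) - r ≠ 0 := ne_of_gt (by linarith [hr.2])
    rw [hA]; field_simp; ring
  nlinarith [mul_le_mul_of_nonneg_left h1 h0.le]

lemma hQpos : ∀ t : ℝ, r ^ ((1:ℝ)/d) ≤ t → 0 < A * t^d + 1 - A := fun t ht =>
  lt_of_lt_of_le hs.1 (hQs hd hr hs hA t ht)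

lemma val_a : (s/r) ^ ((1:ℝ)/d) * r ^ ((1:ℝ)/d) = (A * (r ^ ((1:ℝ)/d))^d + 1 - A) ^ ((1:ℝ)/d) := by
  rw [hapow hd hr hs hA, ← Real.mul_rpow (div_nonneg hs.1.le hr.1.le) hr.1.le,
    div_mul_cancel₀ _ hr.1.ne']
  congr 1
  have h1 : (1:ℝ) - r ≠ 0 := ne_of_gt (by linarith [hr.2])
  rw [hA]; field_simp; ring

lemma rho_eq_phi : ∀ t : ℝ, r ^ ((1:ℝ)/d) ≤ t →
    psi d r s A t * t = (A * t^d + 1 - A) ^ ((1:ℝ)/d) := by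
  intro t ht
  rcases eq_or_lt_of_le ht with h | h
  · rw [psi, if_pos (le_of_eq h.symm), ← h, val_a hd hr hs hA]
  · rw [psi, if_neg (not_le.2 h), div_mul_cancel₀]
    exact ((ha0 hd hr hs hA).trans h).ne'

lemma psi_nonneg : ∀ t : ℝ, 0 ≤ psi d r s A t := by
  intro t
  rw [psi]
  split_ifs with h
  · exact rpow_nonneg (div_nonneg hs.1.le hr.1.le) _
  · have h2 : 0 < t := (ha0 hd hr hs hA).trans (not_le.1 h)
    exact div_nonneg (rpow_nonneg (hQpos hd hr hs hA t (not_le.1 h).le).le _) h2.le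

-- comparison of psi values beyond a with  c = (s/r)^(1/d) and with each other
lemma rpow_pow_self {t : ℝ} (ht : 0 ≤ t) : (t ^ d) ^ ((1:ℝ)/d) = t := by
  rw [← Real.rpow_natCast t d, ← Real.rpow_mul ht, mul_one_div,
    div_self (hdR hd hr hs hA), Real.rpow_one]

-- ψ t ≤ (s/r)^(1/d) in the case r ≤ s  (t > a branch)
lemma psi_le_c (hrs : r ≤ s) : ∀ t : ℝ, psi d r s A t ≤ (s/r) ^ ((1:ℝ)/d) := by
  intro t
  rw [psi]
  split_ifs with h
  · exact le_rfl
  · have h2 : 0 < t := (ha0 hd hr hs hA).trans (not_le.1 h)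
    rw [div_le_iff₀ h2]
    have key : A * t^d + 1 - A ≤ (s/r) * t^d := by
      have := hQr hd hr hs hA t
      have h3 : r ≤ t ^ d := by
        rw [← hapow hd hr hs hA]
        exact pow_le_pow_left₀ (ha0 hd hr hs hA).le (not_le.1 h).le d
      have h4 : ((r - s)/(1-r)) * (t^d - r) ≤ 0 :=
        mul_nonpos_of_nonpos_of_nonneg
          (div_nonpos_of_nonpos_of_nonneg (by linarith) (by linarith [hr.2])) (by linarith)
      rw [div_mul_eq_mul_div, le_div_iff₀ hr.1]; linarith
    calc (A * t^d + 1 - A) ^ ((1:ℝ)/d) ≤ ((s/r) * t^d) ^ ((1:ℝ)/d) :=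
          rpow_le_rpow (hQpos hd hr hs hA t (not_le.1 h).le).le key (by positivity)
      _ = (s/r) ^ ((1:ℝ)/d) * t := by
          rw [Real.mul_rpow (div_nonneg hs.1.le hr.1.le) (by positivity),
            rpow_pow_self hd hr hs hA h2.le]

-- ψ antitone when r ≤ s
lemma psi_anti (hrs : r ≤ s) : Antitone (psi d r s A) := by
  intro t1 t2 h12
  by_cases h2 : t2 ≤ r ^ ((1:ℝ)/d)
  · simp only [psi]; rw [if_pos h2, if_pos (h12.trans h2)]
  · by_cases h1 : t1 ≤ r ^ ((1:ℝ)/d)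
    · conv_rhs => rw [psi, if_pos h1]
      exact psi_le_c hd hr hs hA hrs t2
    · have ha := ha0 hd hr hs hA
      have ht1 : 0 < t1 := ha.trans (not_le.1 h1)
      have ht2 : 0 < t2 := ha.trans (not_le.1 h2)
      simp only [psi]; rw [if_neg h1, if_neg h2, div_le_div_iff₀ ht2 ht1]
      have hQ1 := hQpos hd hr hs hA t1 (not_le.1 h1).le
      have hQ2 := hQpos hd hr hs hA t2 (not_le.1 h2).le
      have hA1 : A ≤ 1 := by
        rw [hA, div_le_one (by linarith [hr.2])]; linarith
      refine (pow_le_pow_iff_left₀ (by positivity) (by positivity) hd.ne').1 ?_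
      rw [mul_pow, mul_pow, ← Real.rpow_natCast ((A * t2^d + 1 - A) ^ ((1:ℝ)/d)) d,
        ← Real.rpow_natCast ((A * t1^d + 1 - A) ^ ((1:ℝ)/d)) d,
        ← Real.rpow_mul hQ2.le, ← Real.rpow_mul hQ1.le, one_div,
        inv_mul_cancel₀ (hdR hd hr hs hA), Real.rpow_one, Real.rpow_one]
      have h3 : t1 ^ d ≤ t2 ^ d := pow_le_pow_left₀ ht1.le h12 d
      nlinarith

-- case s ≤ r : A ≥ 1
lemma hA1' (hsr : s ≤ r) : 1 ≤ A := by
  rw [hA, le_div_iff₀ (by linarith [hr.2] : (0:ℝ) < 1 - r)]; linarith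

-- ψ t ≤ A^(1/d) on the outer branch, and overall ψ ≤ K2
lemma psi_le_K2 (hsr : s ≤ r) : ∀ t : ℝ,
    psi d r s A t ≤ ((1-s)*r/((1-r)*s)) * (s/r) ^ ((1:ℝ)/d) := by
  intro t
  have hr1 : (0:ℝ) < 1 - r := by linarith [hr.2]
  have hK2c : ((1-s)*r/((1-r)*s)) * (s/r) ^ ((1:ℝ)/d)
      = A * ((r/s) * (s/r) ^ ((1:ℝ)/d)) := by
    rw [hA]; field_simp
  have hsr0 : 0 < s / r := div_pos hs.1 hr.1
  have hc0 : 0 ≤ (s/r) ^ ((1:ℝ)/d) := (rpow_pos_of_pos hsr0 _).le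
  rw [psi]
  split_ifs with h
  · -- c ≤ K2
    rw [hK2c]
    have h1 : (1:ℝ) ≤ A := hA1' hd hr hs hA hsr
    have h2 : (1:ℝ) ≤ r / s := (one_le_div hs.1).2 hsr
    nlinarith [mul_le_mul_of_nonneg_right h2 hc0]
  · -- outer branch : ψ t ≤ A^(1/d) ≤ A ≤ K2
    have ht : 0 < t := (ha0 hd hr hs hA).trans (not_le.1 h)
    have hA1 : 1 ≤ A := hA1' hd hr hs hA hsr
    have hQA : A * t^d + 1 - A ≤ A * t^d := by linarith
    have step1 : (A * t^d + 1 - A) ^ ((1:ℝ)/d) / t ≤ A ^ ((1:ℝ)/d) := by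
      rw [div_le_iff₀ ht]
      calc (A * t^d + 1 - A) ^ ((1:ℝ)/d) ≤ (A * t^d) ^ ((1:ℝ)/d) :=
            rpow_le_rpow (hQpos hd hr hs hA t (not_le.1 h).le).le hQA (by positivity)
        _ = A ^ ((1:ℝ)/d) * t := by
            rw [Real.mul_rpow (by linarith) (by positivity), rpow_pow_self hd hr hs hA ht.le]
    refine step1.trans ?_
    have step2 : A ^ ((1:ℝ)/d) ≤ A := by
      calc A ^ ((1:ℝ)/d) ≤ A ^ (1:ℝ) :=
            rpow_le_rpow_of_exponent_le hA1 (by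
              rw [div_le_one (by exact_mod_cast hd)]
              exact_mod_cast Nat.one_le_cast.2 hd)
        _ = A := Real.rpow_one A
    refine step2.trans ?_
    rw [hK2c]
    have h2 : (1:ℝ) ≤ (r/s) * (s/r) ^ ((1:ℝ)/d) := by
      have h3 : s/r ≤ (s/r) ^ ((1:ℝ)/d) := by
        calc s/r = (s/r) ^ (1:ℝ) := (Real.rpow_one _).symm
          _ ≤ (s/r) ^ ((1:ℝ)/d) := by
            apply rpow_le_rpow_of_exponent_ge hsr0 (by rw [div_le_one hr.1]; exact hsr)
            rw [div_le_one (by exact_mod_cast hd)]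
            exact_mod_cast Nat.one_le_cast.2 hd
      calc (1:ℝ) = (r/s) * (s/r) := by
            rw [div_mul_div_comm, mul_comm s r, div_self (mul_ne_zero hr.1.ne' hs.1.ne')]
        _ ≤ (r/s) * (s/r) ^ ((1:ℝ)/d) :=
            mul_le_mul_of_nonneg_left h3 (div_pos hr.1 hs.1).le
    nlinarith [hA0 hd hr hs hA]

-- ψ monotone when s ≤ r
lemma psi_mono (hsr : s ≤ r) : Monotone (psi d r s A) := by
  intro t1 t2 h12
  by_cases h2 : t2 ≤ r ^ ((1:ℝ)/d)
  · simp only [psi]; rw [if_pos h2, if_pos (h12.trans h2)]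
  · have ha := ha0 hd hr hs hA
    have ht2 : 0 < t2 := ha.trans (not_le.1 h2)
    have hQ2 := hQpos hd hr hs hA t2 (not_le.1 h2).le
    by_cases h1 : t1 ≤ r ^ ((1:ℝ)/d)
    · -- c ≤ ψ t2
      conv_lhs => rw [psi, if_pos h1]
      rw [psi, if_neg h2, le_div_iff₀ ht2]
      have key : (s/r) * t2^d ≤ A * t2^d + 1 - A := by
        have h5 := hQr hd hr hs hA t2
        have h3 : r ≤ t2 ^ d := by
          rw [← hapow hd hr hs hA]
          exact pow_le_pow_left₀ ha.le (not_le.1 h2).le d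
        have h4 : 0 ≤ ((r - s)/(1-r)) * (t2^d - r) :=
          mul_nonneg (div_nonneg (by linarith) (by linarith [hr.2])) (by linarith)
        rw [div_mul_eq_mul_div, div_le_iff₀ hr.1]; linarith
      calc (s/r) ^ ((1:ℝ)/d) * t2 = ((s/r) * t2^d) ^ ((1:ℝ)/d) := by
            rw [Real.mul_rpow (div_nonneg hs.1.le hr.1.le) (by positivity),
              rpow_pow_self hd hr hs hA ht2.le]
        _ ≤ (A * t2^d + 1 - A) ^ ((1:ℝ)/d) :=
            rpow_le_rpow (mul_nonneg (div_nonneg hs.1.le hr.1.le) (pow_nonneg ht2.le d))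
              key (by positivity)
    · have ht1 : 0 < t1 := ha.trans (not_le.1 h1)
      have hQ1 := hQpos hd hr hs hA t1 (not_le.1 h1).le
      simp only [psi]; rw [if_neg h1, if_neg h2, div_le_div_iff₀ ht1 ht2]
      have hA1 : 1 ≤ A := hA1' hd hr hs hA hsr
      refine (pow_le_pow_iff_left₀ (by positivity) (by positivity) hd.ne').1 ?_
      rw [mul_pow, mul_pow, ← Real.rpow_natCast ((A * t2^d + 1 - A) ^ ((1:ℝ)/d)) d,
        ← Real.rpow_natCast ((A * t1^d + 1 - A) ^ ((1:ℝ)/d)) d,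
        ← Real.rpow_mul hQ2.le, ← Real.rpow_mul hQ1.le, one_div,
        inv_mul_cancel₀ (hdR hd hr hs hA), Real.rpow_one, Real.rpow_one]
      have h3 : t1 ^ d ≤ t2 ^ d := pow_le_pow_left₀ ht1.le h12 d
      nlinarith

-- ρ monotone on [0,∞)
lemma rho_mono : ∀ u v : ℝ, 0 ≤ v → v ≤ u → psi d r s A v * v ≤ psi d r s A u * u := by
  intro u v hv hvu
  have ha := ha0 hd hr hs hA
  have hc0 : 0 ≤ (s/r) ^ ((1:ℝ)/d) := (rpow_pos_of_pos (div_pos hs.1 hr.1) _).le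
  have phi_mono : ∀ w t : ℝ, 0 ≤ t → t ≤ w → r ^ ((1:ℝ)/d) ≤ t →
      (A * t^d + 1 - A) ^ ((1:ℝ)/d) ≤ (A * w^d + 1 - A) ^ ((1:ℝ)/d) := by
    intro w t ht htw hat
    apply rpow_le_rpow (hQpos hd hr hs hA t hat).le _ (by positivity)
    have : t ^ d ≤ w ^ d := pow_le_pow_left₀ ht htw d
    nlinarith [hA0 hd hr hs hA]
  by_cases hu : u ≤ r ^ ((1:ℝ)/d)
  · simp only [psi]; rw [if_pos hu, if_pos (hvu.trans hu)]
    exact mul_le_mul_of_nonneg_left hvu hc0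
  · rw [rho_eq_phi hd hr hs hA u (not_le.1 hu).le]
    by_cases hv' : v ≤ r ^ ((1:ℝ)/d)
    · rw [psi, if_pos hv']
      calc (s/r) ^ ((1:ℝ)/d) * v ≤ (s/r) ^ ((1:ℝ)/d) * r ^ ((1:ℝ)/d) :=
            mul_le_mul_of_nonneg_left hv' hc0
        _ = (A * (r ^ ((1:ℝ)/d))^d + 1 - A) ^ ((1:ℝ)/d) := val_a hd hr hs hA
        _ ≤ (A * u^d + 1 - A) ^ ((1:ℝ)/d) := phi_mono u _ ha.le (not_le.1 hu).le le_rfl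
    · rw [rho_eq_phi hd hr hs hA v (not_le.1 hv').le]
      exact phi_mono u v hv hvu (not_le.1 hv').le

-- Lipschitz bound for φ on [a, ∞), parametric in lower bound B for Q/t^d
lemma phi_lip (K B : ℝ) (hB : 0 < B)
    (hQB : ∀ t : ℝ, r ^ ((1:ℝ)/d) ≤ t → B * t^d ≤ A * t^d + 1 - A)
    (hABK : A * B ^ ((1:ℝ)/d - 1) ≤ K) :
    ∀ u v : ℝ, r ^ ((1:ℝ)/d) ≤ v → r ^ ((1:ℝ)/d) ≤ u →
      |(A * u^d + 1 - A) ^ ((1:ℝ)/d) - (A * v^d + 1 - A) ^ ((1:ℝ)/d)| ≤ K * |u - v| := by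
  have ha := ha0 hd hr hs hA
  have hA' := hA0 hd hr hs hA
  have hdR' := hdR hd hr hs hA
  set f' : ℝ → ℝ := fun t => A * ((d:ℝ) * t^(d-1)) * ((1:ℝ)/d) * (A*t^d+1-A) ^ ((1:ℝ)/d - 1)
    with hf'
  have hderiv : ∀ t ∈ Set.Ici (r ^ ((1:ℝ)/d)), HasDerivWithinAt
      (fun x : ℝ => (A * x^d + 1 - A) ^ ((1:ℝ)/d)) (f' t) (Set.Ici (r ^ ((1:ℝ)/d))) t := by
    intro t ht
    have hQ := hQpos hd hr hs hA t ht
    have h1 : HasDerivAt (fun x : ℝ => A * x^d + 1 - A) (A * ((d:ℝ) * t^(d-1))) t :=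
      (((hasDerivAt_pow d t).const_mul A).add_const 1).sub_const A
    exact (h1.rpow_const (Or.inl hQ.ne')).hasDerivWithinAt
  have hbound : ∀ t ∈ Set.Ici (r ^ ((1:ℝ)/d)), ‖f' t‖ ≤ K := by
    intro t ht
    have ht0 : 0 < t := ha.trans_le ht
    have hQ := hQpos hd hr hs hA t ht
    have hBt : 0 < B * t ^ d := mul_pos hB (pow_pos ht0 d)
    have hf'eq : f' t = A * t ^ ((d:ℝ) - 1) * (A*t^d+1-A) ^ ((1:ℝ)/d - 1) := by
      simp only [hf']
      rw [← Real.rpow_natCast t (d-1), Nat.cast_sub hd]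
      push_cast
      field_simp
    have hstep : (A*t^d+1-A) ^ ((1:ℝ)/d - 1) ≤ (B * t^d) ^ ((1:ℝ)/d - 1) :=
      rpow_le_rpow_of_nonpos hBt (hQB t ht) (by
        rw [sub_nonpos, div_le_one (by exact_mod_cast hd)]
        exact_mod_cast Nat.one_le_cast.2 hd)
    have heq2 : A * t ^ ((d:ℝ) - 1) * (B * t^d) ^ ((1:ℝ)/d - 1) = A * B ^ ((1:ℝ)/d - 1) := by
      rw [Real.mul_rpow hB.le (pow_nonneg ht0.le d), ← Real.rpow_natCast t d,
        ← Real.rpow_mul ht0.le]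
      have hcomb : A * t ^ ((d:ℝ) - 1) * (B ^ ((1:ℝ)/d - 1) * t ^ ((d:ℝ) * ((1:ℝ)/d - 1)))
          = A * B ^ ((1:ℝ)/d - 1) * (t ^ ((d:ℝ) - 1) * t ^ ((d:ℝ) * ((1:ℝ)/d - 1))) := by ring
      rw [hcomb, ← Real.rpow_add ht0]
      have : (d:ℝ) - 1 + (d:ℝ) * ((1:ℝ)/d - 1) = 0 := by field_simp; ring
      rw [this, Real.rpow_zero, mul_one]
    have hpos : 0 ≤ f' t := by
      rw [hf'eq]
      have := Real.rpow_nonneg hQ.le ((1:ℝ)/d - 1)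
      have := Real.rpow_nonneg ht0.le ((d:ℝ) - 1)
      positivity
    rw [Real.norm_eq_abs, abs_of_nonneg hpos, hf'eq]
    calc A * t ^ ((d:ℝ) - 1) * (A*t^d+1-A) ^ ((1:ℝ)/d - 1)
        ≤ A * t ^ ((d:ℝ) - 1) * (B * t^d) ^ ((1:ℝ)/d - 1) := by
          apply mul_le_mul_of_nonneg_left hstep
          positivity
      _ = A * B ^ ((1:ℝ)/d - 1) := heq2
      _ ≤ K := hABK
  intro u v hv hu
  have := Convex.norm_image_sub_le_of_norm_hasDerivWithin_le hderiv hbound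
    (convex_Ici _) hv hu
  simpa [Real.norm_eq_abs] using this

-- full ρ Lipschitz bound
lemma rho_lip (K B : ℝ) (hB : 0 < B)
    (hQB : ∀ t : ℝ, r ^ ((1:ℝ)/d) ≤ t → B * t^d ≤ A * t^d + 1 - A)
    (hABK : A * B ^ ((1:ℝ)/d - 1) ≤ K)
    (hcK : (s/r) ^ ((1:ℝ)/d) ≤ K) :
    ∀ u v : ℝ, 0 ≤ v → v ≤ u → |psi d r s A u * u - psi d r s A v * v| ≤ K * (u - v) := by
  intro u v hv hvu
  have ha := ha0 hd hr hs hA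
  have hc0 : 0 ≤ (s/r) ^ ((1:ℝ)/d) := (rpow_pos_of_pos (div_pos hs.1 hr.1) _).le
  have hlin : ∀ p q : ℝ, q ≤ p → p ≤ r ^ ((1:ℝ)/d) →
      |psi d r s A p * p - psi d r s A q * q| ≤ K * (p - q) := by
    intro p q hqp hp
    simp only [psi]
    rw [if_pos hp, if_pos (hqp.trans hp), ← mul_sub, abs_mul,
      abs_of_nonneg hc0, abs_of_nonneg (by linarith : (0:ℝ) ≤ p - q)]
    exact mul_le_mul_of_nonneg_right hcK (by linarith)
  have hout : ∀ p q : ℝ, q ≤ p → r ^ ((1:ℝ)/d) ≤ q →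
      |psi d r s A p * p - psi d r s A q * q| ≤ K * (p - q) := by
    intro p q hqp hq
    rw [rho_eq_phi hd hr hs hA p (hq.trans hqp), rho_eq_phi hd hr hs hA q hq]
    have := phi_lip hd hr hs hA K B hB hQB hABK p q hq (hq.trans hqp)
    rwa [abs_of_nonneg (by linarith : (0:ℝ) ≤ p - q)] at this
  by_cases hu : u ≤ r ^ ((1:ℝ)/d)
  · exact hlin u v hvu hu
  · by_cases hv' : r ^ ((1:ℝ)/d) ≤ v
    · exact hout u v hvu hv'
    · have h1 : v ≤ r ^ ((1:ℝ)/d) := (not_le.1 hv').le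
      calc |psi d r s A u * u - psi d r s A v * v|
          ≤ |psi d r s A u * u - psi d r s A (r ^ ((1:ℝ)/d)) * (r ^ ((1:ℝ)/d))|
            + |psi d r s A (r ^ ((1:ℝ)/d)) * (r ^ ((1:ℝ)/d)) - psi d r s A v * v| :=
            abs_sub_le _ _ _
        _ ≤ K * (u - r ^ ((1:ℝ)/d)) + K * (r ^ ((1:ℝ)/d) - v) :=
            add_le_add (hout u _ (not_le.1 hu).le le_rfl) (hlin _ v h1 le_rfl)
        _ = K * (u - v) := by ring

end facts

lemma norm_update {d : ℕ} (x : Fin d → ℝ) (j : Fin d) (p : ℝ) :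
    ‖Function.update x j p‖ = max |p| ‖Function.update x j (0:ℝ)‖ := by
  apply le_antisymm
  · apply (pi_norm_le_iff_of_nonneg (le_max_of_le_left (abs_nonneg p))).2
    intro i
    by_cases h : i = j
    · subst h; simp [Real.norm_eq_abs]
    · have h1 : Function.update x j p i = x i := Function.update_of_ne h _ _
      have h2 : Function.update x j (0:ℝ) i = x i := Function.update_of_ne h _ _
      rw [h1]
      refine le_max_of_le_right ?_
      calc ‖x i‖ = ‖Function.update x j (0:ℝ) i‖ := by rw [h2]
        _ ≤ _ := norm_le_pi_norm _ i
  · apply max_le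
    · calc |p| = ‖Function.update x j p j‖ := by simp [Real.norm_eq_abs]
        _ ≤ _ := norm_le_pi_norm _ j
    · apply (pi_norm_le_iff_of_nonneg (norm_nonneg _)).2
      intro i
      by_cases h : i = j
      · subst h; simp
      · rw [Function.update_of_ne h, ← Function.update_of_ne h p x]
        exact norm_le_pi_norm _ i

-- coordinate-line Lipschitz bound for G x := ψ ‖x‖ • x
lemma keyG {d : ℕ} (ψ : ℝ → ℝ) (K : ℝ)
    (hmono : Monotone ψ ∨ Antitone ψ)
    (hψ0 : ∀ t, 0 ≤ ψ t) (hψK : ∀ t, 0 ≤ t → ψ t ≤ K)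
    (hρlip : ∀ u v : ℝ, 0 ≤ v → v ≤ u → |ψ u * u - ψ v * v| ≤ K * (u - v))
    (hρmono : ∀ u v : ℝ, 0 ≤ v → v ≤ u → ψ v * v ≤ ψ u * u)
    (x : Fin d → ℝ) (j i : Fin d) (p q : ℝ) :
    |ψ ‖Function.update x j p‖ * (Function.update x j p i)
      - ψ ‖Function.update x j q‖ * (Function.update x j q i)| ≤ K * |p - q| := by
  have hK : 0 ≤ K := (hψ0 0).trans (hψK 0 le_rfl)
  set m : ℝ := ‖Function.update x j (0:ℝ)‖ with hm
  have hm0 : 0 ≤ m := norm_nonneg _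
  have hnp : ‖Function.update x j p‖ = max |p| m := norm_update x j p
  have hnq : ‖Function.update x j q‖ = max |q| m := norm_update x j q
  by_cases hij : i = j
  · subst hij
    rw [hnp, hnq, Function.update_self, Function.update_self]
    exact oneD ψ K hψ0 hψK hρlip hm0 p q
  · rw [hnp, hnq, Function.update_of_ne hij, Function.update_of_ne hij, ← sub_mul]
    -- |(ψ u - ψ v) * x i| ≤ K |p - q| with u,v the two norms
    have hxi : |x i| ≤ m := by
      calc |x i| = ‖Function.update x j (0:ℝ) i‖ := by
            rw [Function.update_of_ne hij]; rfl
        _ ≤ m := norm_le_pi_norm _ i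
    have habs : |max |p| m - max |q| m| ≤ |p - q| :=
      (abs_max_sub_max_le_abs _ _ _).trans (abs_abs_sub_abs_le_abs_sub p q)
    rcases le_total (max |q| m) (max |p| m) with hle | hle
    · have h1 := p3 ψ K hmono hψ0 hψK hρlip hρmono
        (le_max_of_le_right hm0 : (0:ℝ) ≤ max |q| m) hle (hxi.trans (le_max_right _ _))
      refine h1.trans ?_
      have : max |p| m - max |q| m ≤ |p - q| := (le_abs_self _).trans habs
      exact mul_le_mul_of_nonneg_left this hK
    · rw [abs_sub_comm p q]
      have h1 : |(ψ (max |p| m) - ψ (max |q| m)) * x i|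
          = |(ψ (max |q| m) - ψ (max |p| m)) * x i| := by
        rw [← abs_neg]; congr 1; ring
      rw [h1]
      have h2 := p3 ψ K hmono hψ0 hψK hρlip hρmono
        (le_max_of_le_right hm0 : (0:ℝ) ≤ max |p| m) hle (hxi.trans (le_max_right _ _))
      refine h2.trans ?_
      have : max |q| m - max |p| m ≤ |q - p| :=
        calc max |q| m - max |p| m ≤ |max |q| m - max |p| m| := le_abs_self _
          _ = |max |p| m - max |q| m| := abs_sub_comm _ _
          _ ≤ |p - q| := habs
          _ = |q - p| := abs_sub_comm _ _
      exact mul_le_mul_of_nonneg_left this hK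


section cases
variable {d : ℕ} {r s A : ℝ} (hd : 0 < d) (hr : r ∈ Set.Ioo (0:ℝ) 1)
  (hs : s ∈ Set.Ioo (0:ℝ) 1) (hA : A = (1 - s) / (1 - r))
include hd hr hs hA

lemma rho_lip1 (hrs : r ≤ s) : ∀ u v : ℝ, 0 ≤ v → v ≤ u →
    |psi d r s A u * u - psi d r s A v * v| ≤ (s/r) ^ ((1:ℝ)/d) * (u - v) := by
  have hA' := hA0 hd hr hs hA
  apply rho_lip hd hr hs hA _ A hA'
  · intro t ht
    have hA1 : A ≤ 1 := by
      rw [hA, div_le_one (by linarith [hr.2])]; linarith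
    linarith
  · have h1 : A * A ^ ((1:ℝ)/d - 1) = A ^ ((1:ℝ)/d) := by
      nth_rewrite 1 [← Real.rpow_one A]
      rw [← Real.rpow_add hA']; ring_nf
    rw [h1]
    apply rpow_le_rpow hA'.le _ (by positivity)
    rw [hA, div_le_div_iff₀ (by linarith [hr.2]) hr.1]
    nlinarith [hr.1, hs.1]
  · exact le_rfl

lemma rho_lip2 (hsr : s ≤ r) : ∀ u v : ℝ, 0 ≤ v → v ≤ u →
    |psi d r s A u * u - psi d r s A v * v|
      ≤ (((1-s)*r/((1-r)*s)) * (s/r) ^ ((1:ℝ)/d)) * (u - v) := by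
  have hA' := hA0 hd hr hs hA
  have hsr0 : 0 < s / r := div_pos hs.1 hr.1
  apply rho_lip hd hr hs hA _ (s/r) hsr0
  · intro t ht
    have h5 := hQr hd hr hs hA t
    have h3 : r ≤ t ^ d := by
      rw [← hapow hd hr hs hA]
      exact pow_le_pow_left₀ (ha0 hd hr hs hA).le ht d
    have h4 : 0 ≤ ((r - s)/(1-r)) * (t^d - r) :=
      mul_nonneg (div_nonneg (by linarith) (by linarith [hr.2])) (by linarith)
    rw [div_mul_eq_mul_div, div_le_iff₀ hr.1]; linarith
  · apply le_of_eq
    rw [show ((1:ℝ)/d - 1) = 1/d + (-1) by ring, Real.rpow_add hsr0,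
      Real.rpow_neg_one, hA]
    have h1 : (1:ℝ) - r ≠ 0 := ne_of_gt (by linarith [hr.2])
    field_simp
  · -- c ≤ K2
    have := psi_le_K2 hd hr hs hA hsr 0
    rwa [psi, if_pos (ha0 hd hr hs hA).le] at this

end cases
end SftHelper

open SftHelper

theorem stmt_12 (d : ℕ) (hd : 0 < d) (r s : ℝ)
    (hr : r ∈ Set.Ioo (0 : ℝ) 1) (hs : s ∈ Set.Ioo (0 : ℝ) 1)
    (A : ℝ) (hA : A = (1 - s) / (1 - r))
    (T : (Fin d → ℝ) → Fin d → ℝ)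
    (hT : ∀ x : Fin d → ℝ, T x =
      if ‖x‖ ≤ r ^ ((1 : ℝ) / d) then (s / r) ^ ((1 : ℝ) / d) • x
      else ((A * ‖x‖ ^ d + 1 - A) ^ ((1 : ℝ) / d) / ‖x‖) • x) :
    (r < s → ∀ x : Fin d → ℝ, r ^ ((1 : ℝ) / d) < ‖x‖ → ‖x‖ ≤ 1 →
      DifferentiableAt ℝ T x → ∀ i j : Fin d,
        |fderiv ℝ T x (Pi.single j 1) i| ≤ (s / r) ^ ((1 : ℝ) / d)) ∧
    (s < r → ∀ x : Fin d → ℝ, r ^ ((1 : ℝ) / d) < ‖x‖ → ‖x‖ ≤ 1 →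
      DifferentiableAt ℝ T x → ∀ i j : Fin d,
        |fderiv ℝ T x (Pi.single j 1) i| ≤
          ((1 - s) * r / ((1 - r) * s)) * (s / r) ^ ((1 : ℝ) / d)) ∧
    ∃ K : NNReal, LipschitzOnWith K T (Metric.closedBall 0 1) := by
  have hTG : ∀ (x : Fin d → ℝ) (i : Fin d), T x i = psi d r s A ‖x‖ * x i := by
    intro x i
    rw [hT x, psi]
    split_ifs with h <;> simp
  have hψ0 := psi_nonneg hd hr hs hA
  have hρmono := rho_mono hd hr hs hA
  -- generic fderiv bound
  have main : ∀ K : ℝ, (Monotone (psi d r s A) ∨ Antitone (psi d r s A)) →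
      (∀ t : ℝ, 0 ≤ t → psi d r s A t ≤ K) →
      (∀ u v : ℝ, 0 ≤ v → v ≤ u →
        |psi d r s A u * u - psi d r s A v * v| ≤ K * (u - v)) →
      ∀ x : Fin d → ℝ, DifferentiableAt ℝ T x → ∀ i j : Fin d,
        |fderiv ℝ T x (Pi.single j 1) i| ≤ K := by
    intro K hmono hψK hρlip x hdiff i j
    have hK : 0 ≤ K := (hψ0 0).trans (hψK 0 le_rfl)
    set e : Fin d → ℝ := Pi.single j 1 with he
    have hupd : ∀ c : ℝ, x + c • e = Function.update x j (x j + c) := by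
      intro c; funext k
      by_cases hk : k = j
      · subst hk; simp [he]
      · simp [he, Function.update_of_ne hk, Pi.single_eq_of_ne hk]
    have hline : ∀ t : ℝ, |T (x + t • e) i - T x i| ≤ K * |t| := by
      intro t
      rw [hupd t]
      have e2 : T x i = psi d r s A ‖Function.update x j (x j)‖
          * (Function.update x j (x j) i) := by
        rw [Function.update_eq_self]; exact hTG x i
      rw [hTG _ i, e2]
      have := keyG (psi d r s A) K hmono hψ0 hψK hρlip hρmono x j i (x j + t) (x j)
      simpa using this
    have hd1 : HasDerivAt (fun t : ℝ => x + t • e) e 0 := by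
      simpa using ((hasDerivAt_id (0:ℝ)).smul_const e).const_add x
    have hd2 : HasDerivAt (fun t : ℝ => T (x + t • e)) (fderiv ℝ T x e) 0 := by
      have hd' : HasFDerivAt T (fderiv ℝ T x) (x + (0:ℝ) • e) := by
        rw [show x + (0:ℝ) • e = x by simp]
        exact hdiff.hasFDerivAt
      exact hd'.comp_hasDerivAt 0 hd1
    have hd3 : HasDerivAt (fun t : ℝ => T (x + t • e) i)
        (fderiv ℝ T x e i) 0 := hasDerivAt_pi.1 hd2 i
    rw [hasDerivAt_iff_tendsto_slope] at hd3
    have habs : Filter.Tendsto (fun t => |slope (fun t : ℝ => T (x + t • e) i) 0 t|)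
        (nhdsWithin 0 {(0:ℝ)}ᶜ) (nhds |fderiv ℝ T x e i|) :=
      hd3.abs
    refine le_of_tendsto habs ?_
    filter_upwards [self_mem_nhdsWithin] with t ht
    have ht0 : t ≠ 0 := ht
    rw [slope_def_field]
    have h0 : T (x + (0:ℝ) • e) i = T x i := by norm_num
    rw [abs_div, div_le_iff₀ (by simpa using abs_pos.2 (sub_ne_zero.2 ht0))]
    calc |T (x + t • e) i - T (x + (0:ℝ) • e) i|
        = |T (x + t • e) i - T x i| := by rw [h0]
      _ ≤ K * |t| := hline t
      _ = K * |t - 0| := by rw [sub_zero]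
  -- generic global Lipschitz bound
  have lip : ∀ K : ℝ, (Monotone (psi d r s A) ∨ Antitone (psi d r s A)) →
      (∀ t : ℝ, 0 ≤ t → psi d r s A t ≤ K) →
      (∀ u v : ℝ, 0 ≤ v → v ≤ u →
        |psi d r s A u * u - psi d r s A v * v| ≤ K * (u - v)) →
      ∀ y z : Fin d → ℝ, dist (T y) (T z) ≤ 2 * K * dist y z := by
    intro K hmono hψK hρlip y z
    have hK : 0 ≤ K := (hψ0 0).trans (hψK 0 le_rfl)
    have key : ∀ y z : Fin d → ℝ, ‖z‖ ≤ ‖y‖ → ∀ i : Fin d,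
        |T y i - T z i| ≤ 2 * K * ‖y - z‖ := by
      intro y z hzy i
      rw [hTG y i, hTG z i]
      have h1 : psi d r s A ‖y‖ * y i - psi d r s A ‖z‖ * z i
          = psi d r s A ‖y‖ * (y i - z i) + (psi d r s A ‖y‖ - psi d r s A ‖z‖) * z i := by
        ring
      rw [h1]
      have h2 : |psi d r s A ‖y‖ * (y i - z i)| ≤ K * ‖y - z‖ := by
        rw [abs_mul, abs_of_nonneg (hψ0 _)]
        have h3 : |y i - z i| ≤ ‖y - z‖ := by
          calc |y i - z i| = ‖(y - z) i‖ := by simp [Real.norm_eq_abs]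
            _ ≤ ‖y - z‖ := norm_le_pi_norm _ i
        exact mul_le_mul (hψK _ (norm_nonneg _)) h3 (abs_nonneg _) hK
      have h4 : |(psi d r s A ‖y‖ - psi d r s A ‖z‖) * z i| ≤ K * ‖y - z‖ := by
        have h5 : |z i| ≤ ‖z‖ := by
          calc |z i| = ‖z i‖ := rfl
            _ ≤ ‖z‖ := norm_le_pi_norm _ i
        have h6 := p3 (psi d r s A) K hmono hψ0 hψK hρlip hρmono (norm_nonneg z) hzy h5
        refine h6.trans ?_
        have h7 : ‖y‖ - ‖z‖ ≤ ‖y - z‖ := (le_abs_self _).trans (abs_norm_sub_norm_le y z)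
        exact mul_le_mul_of_nonneg_left h7 hK
      calc |psi d r s A ‖y‖ * (y i - z i) + (psi d r s A ‖y‖ - psi d r s A ‖z‖) * z i|
          ≤ |psi d r s A ‖y‖ * (y i - z i)| + |(psi d r s A ‖y‖ - psi d r s A ‖z‖) * z i| :=
            abs_add_le _ _
        _ ≤ K * ‖y - z‖ + K * ‖y - z‖ := add_le_add h2 h4
        _ = 2 * K * ‖y - z‖ := by ring
    have hd2 : (0:ℝ) ≤ 2 * K * dist y z := mul_nonneg (by linarith) dist_nonneg
    rw [dist_pi_le_iff hd2]
    intro i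
    rw [Real.dist_eq]
    rcases le_total ‖z‖ ‖y‖ with h | h
    · calc |T y i - T z i| ≤ 2 * K * ‖y - z‖ := key y z h i
        _ = 2 * K * dist y z := by rw [dist_eq_norm]
    · calc |T y i - T z i| = |T z i - T y i| := (abs_sub_comm _ _)
        _ ≤ 2 * K * ‖z - y‖ := key z y h i
        _ = 2 * K * dist y z := by rw [← dist_eq_norm, dist_comm]
  refine ⟨?_, ?_, ?_⟩
  · intro hrs x _ _ hdiff i j
    exact main _ (Or.inr (psi_anti hd hr hs hA hrs.le))
      (fun t _ => psi_le_c hd hr hs hA hrs.le t) (rho_lip1 hd hr hs hA hrs.le) x hdiff i j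
  · intro hsr x _ _ hdiff i j
    exact main _ (Or.inl (psi_mono hd hr hs hA hsr.le))
      (fun t _ => psi_le_K2 hd hr hs hA hsr.le t) (rho_lip2 hd hr hs hA hsr.le) x hdiff i j
  · rcases le_total r s with h | h
    · refine ⟨Real.toNNReal (2 * ((s/r) ^ ((1:ℝ)/d))), ?_⟩
      rw [lipschitzOnWith_iff_dist_le_mul]
      intro y _ z _
      have hK : (0:ℝ) ≤ 2 * ((s/r) ^ ((1:ℝ)/d)) := by
        have := Real.rpow_nonneg (div_nonneg hs.1.le hr.1.le) ((1:ℝ)/d); linarith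
      rw [Real.coe_toNNReal _ hK]
      exact lip _ (Or.inr (psi_anti hd hr hs hA h))
        (fun t _ => psi_le_c hd hr hs hA h t) (rho_lip1 hd hr hs hA h) y z
    · refine ⟨Real.toNNReal (2 * (((1-s)*r/((1-r)*s)) * (s/r) ^ ((1:ℝ)/d))), ?_⟩
      rw [lipschitzOnWith_iff_dist_le_mul]
      intro y _ z _
      have hc2 : (0:ℝ) ≤ 2 * (((1-s)*r/((1-r)*s)) * (s/r) ^ ((1:ℝ)/d)) := by
        have h1 : (0:ℝ) ≤ (1-s)*r/((1-r)*s) := by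
          apply div_nonneg
          · nlinarith [hs.2, hr.1]
          · nlinarith [hr.2, hs.1]
        have h2 := Real.rpow_nonneg (div_nonneg hs.1.le hr.1.le) ((1:ℝ)/d)
        nlinarith [mul_nonneg h1 h2]
      rw [Real.coe_toNNReal _ hc2]
      exact lip _ (Or.inl (psi_mono hd hr hs hA h))
        (fun t _ => psi_le_K2 hd hr hs hA h t) (rho_lip2 hd hr hs hA h) y z
end

section
/- Let d ≥ 2, 1 ≤ p < ∞, Ω = (0,1)^d, and suppose there exist a dyadic permutation P ≠ Id of the cube (a measure-preserving bijection translating the open dyadic subcubes of some order) and, for every δ, γ > 0, a volume preserving Lipschitz homeomorphism f of [0,1]^d equal to the identity near ∂[0,1]^d with ‖D(f − Id)‖_p < δ and λ{x : P(x) ≠ f(x)} < γ. Then, using the Poincaré inequality ‖f − Id‖_p ≤ C‖D(f − Id)‖_p for maps vanishing on the boundary, one derives ‖P − Id‖_p ≤ 2γ^{1/p} ‖P − Id‖_∞ + Cδ-type bounds, yielding ‖P − Id‖_p = 0 as δ, γ → 0, a contradiction. Hence for p ≥ 1 no such family of approximating maps f exists for any dyadic permutation P ≠ Id. -/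
open MeasureTheory Set Filter Topology
open scoped ENNReal NNReal

private lemma aux_slope {E : Type*} [NormedAddCommGroup E] [NormedSpace ℝ E]
    {g : ℝ → E} {v : ℝ} {g' : E} (hg : HasDerivAt g g' v) :
    Tendsto (fun n : ℕ => ((n:ℝ)+1) • (g (v + ((n:ℝ)+1)⁻¹) - g v)) atTop (𝓝 g') := by
  have hs := hasDerivAt_iff_tendsto_slope.1 hg
  have hu : Tendsto (fun n : ℕ => v + ((n:ℝ)+1)⁻¹) atTop (𝓝[≠] v) := by
    apply tendsto_nhdsWithin_of_tendsto_nhds_of_eventually_within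
    · have : Tendsto (fun n : ℕ => ((n:ℝ)+1)⁻¹) atTop (𝓝 0) := by
        simpa using tendsto_one_div_add_atTop_nhds_zero_nat (𝕜 := ℝ)
      simpa using tendsto_const_nhds.add this
    · filter_upwards with n
      have h1 : (0:ℝ) < ((n:ℝ)+1)⁻¹ := by positivity
      simp only [Set.mem_compl_iff, Set.mem_singleton_iff]
      intro hEq; nlinarith [hEq]
  have h2 := hs.comp hu
  convert h2 using 2 with n
  simp only [Function.comp, slope_def_module]
  congr 1
  have hv : v + ((n:ℝ)+1)⁻¹ - v = ((n:ℝ)+1)⁻¹ := by ring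
  rw [hv, inv_inv]

set_option maxHeartbeats 1000000 in
private lemma ftc_lip {d : ℕ} {K : NNReal} {h : ℝ → (Fin d → ℝ)} (hh : LipschitzWith K h)
    {b : ℝ} (hb0 : 0 ≤ b) (hb1 : b ≤ 1) :
    (‖h b - h 0‖₊ : ℝ≥0∞) ≤ ∫⁻ t in Set.Ioc (0:ℝ) 1, (‖deriv h t‖₊ : ℝ≥0∞) := by
  set μ := volume.restrict (Set.Ioc (0:ℝ) b) with hμdef
  have hcont : Continuous h := hh.continuous
  have hint : ∀ a c : ℝ, IntervalIntegrable h volume a c := fun a c =>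
    hcont.intervalIntegrable a c
  set u : ℕ → ℝ := fun n => ((n:ℝ)+1)⁻¹ with hudef
  set F : ℕ → ℝ → (Fin d → ℝ) := fun n t => ((n:ℝ)+1) • (h (t + u n) - h t) with hFdef
  have hshiftcont : ∀ n, Continuous (fun t => h (t + u n)) := fun n =>
    hcont.comp (continuous_id.add continuous_const)
  have hA : ∀ n, ∫ t, F n t ∂μ
      = ((n:ℝ)+1) • ((∫ t in b..(b + u n), h t) - (∫ t in (0:ℝ)..(0 + u n), h t)) := by
    intro n
    have h1 : ∫ t, F n t ∂μ = ∫ t in (0:ℝ)..b, F n t := (intervalIntegral.integral_of_le hb0).symm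
    have h2 : ∫ t in (0:ℝ)..b, F n t
        = ((n:ℝ)+1) • ((∫ t in (0:ℝ)..b, h (t + u n)) - ∫ t in (0:ℝ)..b, h t) := by
      rw [← intervalIntegral.integral_sub ((hshiftcont n).intervalIntegrable _ _)
        (hint 0 b), ← intervalIntegral.integral_smul]
    rw [h1, h2, intervalIntegral.integral_comp_add_right h (u n)]
    congr 1
    have e1 : ∫ t in (0:ℝ)..(b + u n), h t
        = (∫ t in (0:ℝ)..(0 + u n), h t) + ∫ t in (0 + u n)..(b + u n), h t :=
      (intervalIntegral.integral_add_adjacent_intervals (hint _ _) (hint _ _)).symm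
    have e2 : ∫ t in (0:ℝ)..(b + u n), h t
        = (∫ t in (0:ℝ)..b, h t) + ∫ t in b..(b + u n), h t :=
      (intervalIntegral.integral_add_adjacent_intervals (hint _ _) (hint _ _)).symm
    rw [e2] at e1
    linear_combination -e1
  set Hm : ℝ → (Fin d → ℝ) := fun v => ∫ t in (0:ℝ)..v, h t with hHmdef
  have hD : ∀ v : ℝ, HasDerivAt Hm (h v) v := fun v =>
    intervalIntegral.integral_hasDerivAt_right (hint 0 v)
      (hcont.stronglyMeasurableAtFilter _ _) hcont.continuousAt
  have hBlim : Tendsto (fun n => ∫ t, F n t ∂μ) atTop (𝓝 (h b - h 0)) := by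
    have t1 := aux_slope (hD b)
    have t2 := aux_slope (hD 0)
    have t3 := t1.sub t2
    apply t3.congr
    intro n
    rw [hA n]
    have eb : Hm (b + u n) - Hm b = ∫ t in b..(b + u n), h t := by
      have e3 := (intervalIntegral.integral_add_adjacent_intervals (hint 0 b)
        (hint b (b + u n)))
      simp only [hHmdef]
      linear_combination -e3
    have e0 : Hm (0 + u n) - Hm 0 = ∫ t in (0:ℝ)..(0 + u n), h t := by
      simp only [hHmdef, intervalIntegral.integral_same, sub_zero]
    rw [eb, e0, smul_sub]
  have hDer : ∀ᵐ t ∂μ, DifferentiableAt ℝ h t :=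
    ae_restrict_of_ae (hh.ae_differentiableAt (μ := volume))
  have hdct : Tendsto (fun n => ∫ t, F n t ∂μ) atTop (𝓝 (∫ t, deriv h t ∂μ)) := by
    apply MeasureTheory.tendsto_integral_of_dominated_convergence (bound := fun _ => (K:ℝ))
    · intro n
      exact (((hshiftcont n).sub hcont).const_smul ((n:ℝ)+1)).aestronglyMeasurable
    · exact integrable_const _
    · intro n
      filter_upwards with t
      have hn1 : (0:ℝ) < (n:ℝ)+1 := by positivity
      have hun : (0:ℝ) < u n := by rw [hudef]; positivity
      have hd : ‖h (t + u n) - h t‖ ≤ (K:ℝ) * u n := by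
        have h5 := hh.dist_le_mul (t + u n) t
        rw [dist_eq_norm] at h5
        have h6 : dist (t + u n) t = u n := by
          rw [Real.dist_eq, add_sub_cancel_left, abs_of_pos hun]
        rw [h6] at h5
        exact h5
      have h7 : F n t = ((n:ℝ)+1) • (h (t + u n) - h t) := rfl
      rw [h7, norm_smul, Real.norm_of_nonneg hn1.le]
      calc ((n:ℝ)+1) * ‖h (t + u n) - h t‖ ≤ ((n:ℝ)+1) * ((K:ℝ) * u n) :=
            mul_le_mul_of_nonneg_left hd hn1.le
        _ = (K:ℝ) := by
            have h8 : u n = ((n:ℝ)+1)⁻¹ := rfl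
            rw [h8, mul_left_comm, mul_inv_cancel₀ hn1.ne', mul_one]
    · filter_upwards [hDer] with t ht
      exact aux_slope ht.hasDerivAt
  have hkey : ∫ t, deriv h t ∂μ = h b - h 0 := tendsto_nhds_unique hdct hBlim
  calc (‖h b - h 0‖₊ : ℝ≥0∞) = ‖∫ t, deriv h t ∂μ‖₊ := by rw [hkey]
    _ ≤ ∫⁻ t, (‖deriv h t‖₊ : ℝ≥0∞) ∂μ := enorm_integral_le_lintegral_enorm _
    _ ≤ ∫⁻ t in Set.Ioc (0:ℝ) 1, (‖deriv h t‖₊ : ℝ≥0∞) :=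
      lintegral_mono' (Measure.restrict_mono (Set.Ioc_subset_Ioc le_rfl hb1) le_rfl) le_rfl


set_option maxHeartbeats 2000000 in
private lemma poincare_one {d : ℕ} (i₀ : Fin d) {K : NNReal} {f : (Fin d → ℝ) → (Fin d → ℝ)}
    (hf : LipschitzWith K f) {ε : ℝ} (hε : 0 < ε)
    (hbd : ∀ x ∈ Set.Icc (0 : Fin d → ℝ) 1, (∃ i, x i < ε ∨ 1 - ε < x i) → f x = x) :
    ∫⁻ x in Set.Icc (0 : Fin d → ℝ) 1, (‖f x - x‖₊ : ℝ≥0∞)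
      ≤ ∫⁻ x in Set.Icc (0 : Fin d → ℝ) 1,
          (‖fderiv ℝ f x - ContinuousLinearMap.id ℝ (Fin d → ℝ)‖₊ : ℝ≥0∞) := by
  classical
  set B := {i : Fin d // ¬ i = i₀} with hBdef
  set Φ : (ℝ × (B → ℝ)) ≃ᵐ (Fin d → ℝ) :=
    (MeasurableEquiv.prodCongr (MeasurableEquiv.funUnique {i : Fin d // i = i₀} ℝ).symm
      (MeasurableEquiv.refl (B → ℝ))).trans
      (MeasurableEquiv.piEquivPiSubtypeProd (fun _ : Fin d => ℝ) (fun i => i = i₀)).symm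
    with hΦdef
  have hΦap : ∀ (t : ℝ) (y : B → ℝ) (j : Fin d),
      Φ (t, y) j = if h : j = i₀ then t else y ⟨j, h⟩ := by
    intro t y j
    simp only [hΦdef, MeasurableEquiv.trans_apply, MeasurableEquiv.prodCongr,
      MeasurableEquiv.funUnique, MeasurableEquiv.piEquivPiSubtypeProd,
      MeasurableEquiv.symm, MeasurableEquiv.coe_mk, Equiv.prodCongr_apply, Equiv.coe_refl,
      Prod.map]
    rw [Equiv.piEquivPiSubtypeProd_symm_apply]
    split <;> rfl
  have mp : MeasurePreserving (⇑Φ) (volume.prod volume) volume := by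
    have hF : (Subtype.fintype (fun i : Fin d => i = i₀)) = (Fintype.subtypeEq i₀) :=
      Subsingleton.elim _ _
    have mpe2 : MeasurePreserving
        (⇑(MeasurableEquiv.piEquivPiSubtypeProd (fun _ : Fin d => ℝ) (fun i => i = i₀)).symm)
        ((volume : Measure ({i : Fin d // i = i₀} → ℝ)).prod (volume : Measure (B → ℝ)))
        (volume : Measure (Fin d → ℝ)) := by
      have h0 := (volume_preserving_piEquivPiSubtypeProd (fun _ : Fin d => ℝ)
        (fun i => i = i₀)).symm (MeasurableEquiv.piEquivPiSubtypeProd _ _)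
      convert h0 using 2
      · rfl
      rw [Measure.volume_eq_prod]
      congr 1
      rw [hF]
    have mp1 : MeasurePreserving
        (⇑(MeasurableEquiv.funUnique {i : Fin d // i = i₀} ℝ).symm)
        (volume : Measure ℝ) (volume : Measure ({i : Fin d // i = i₀} → ℝ)) :=
      (volume_preserving_funUnique {i : Fin d // i = i₀} ℝ).symm _
    have mpe1 : MeasurePreserving
        (⇑(MeasurableEquiv.prodCongr (MeasurableEquiv.funUnique {i : Fin d // i = i₀} ℝ).symm
          (MeasurableEquiv.refl (B → ℝ))))
        ((volume : Measure ℝ).prod (volume : Measure (B → ℝ)))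
        ((volume : Measure ({i : Fin d // i = i₀} → ℝ)).prod (volume : Measure (B → ℝ))) :=
      mp1.prod (MeasurePreserving.id _)
    exact mpe2.comp mpe1
  set e₀ : (Fin d → ℝ) := Pi.single i₀ 1 with he₀def
  have he₀ : ‖e₀‖ ≤ 1 := by
    rw [pi_norm_le_iff_of_nonneg zero_le_one]
    intro j
    rw [he₀def, Pi.single_apply]
    split <;> simp
  have hline : ∀ (t : ℝ) (y : B → ℝ), Φ (t, y) = Φ (0, y) + t • e₀ := by
    intro t y
    funext j
    simp only [Pi.add_apply, Pi.smul_apply, hΦap, he₀def, Pi.single_apply, smul_eq_mul]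
    by_cases hj : j = i₀ <;> simp [hj]
  have hmem : ∀ (t : ℝ) (y : B → ℝ), (Φ (t, y) ∈ Set.Icc (0:Fin d → ℝ) 1)
      ↔ (t ∈ Set.Icc (0:ℝ) 1 ∧ ∀ j : B, y j ∈ Set.Icc (0:ℝ) 1) := by
    intro t y
    simp only [Set.mem_Icc, Pi.le_def]
    constructor
    · rintro ⟨h0, h1⟩
      refine ⟨⟨?_, ?_⟩, fun j => ⟨?_, ?_⟩⟩
      · have := h0 i₀; simpa [hΦap] using this
      · have := h1 i₀; simpa [hΦap] using this
      · have := h0 j.1; simpa [hΦap, j.2] using this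
      · have := h1 j.1; simpa [hΦap, j.2] using this
    · rintro ⟨⟨h0, h1⟩, hj⟩
      constructor <;> intro j <;> rw [hΦap] <;> by_cases hji : j = i₀
      · simpa [hji] using h0
      · simpa [hji] using (hj ⟨j, hji⟩).1
      · simpa [hji] using h1
      · simpa [hji] using (hj ⟨j, hji⟩).2
  set g : (Fin d → ℝ) → (Fin d → ℝ) := fun x => f x - x with hgdef
  have hg : LipschitzWith (K + 1) g := by
    have := hf.sub (LipschitzWith.id (α := Fin d → ℝ))
    simpa [hgdef] using this
  set G : (Fin d → ℝ) → ℝ≥0∞ :=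
    (Set.Icc (0:Fin d → ℝ) 1).indicator (fun x => (‖g x‖₊ : ℝ≥0∞)) with hGdef
  set M : (Fin d → ℝ) → ℝ≥0∞ := (Set.Icc (0:Fin d → ℝ) 1).indicator
    (fun x => (‖fderiv ℝ f x - ContinuousLinearMap.id ℝ (Fin d → ℝ)‖₊ : ℝ≥0∞)) with hMdef
  have hGmeas : Measurable G :=
    (hg.continuous.measurable.enorm).indicator measurableSet_Icc
  have hMmeas : Measurable M :=
    (((measurable_fderiv ℝ f).sub measurable_const).enorm).indicator measurableSet_Icc
  rw [← lintegral_indicator measurableSet_Icc, ← lintegral_indicator measurableSet_Icc]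
  have hGint : ∫⁻ x, G x = ∫⁻ y, ∫⁻ t, G (Φ (t, y)) ∂volume ∂volume := by
    rw [← mp.lintegral_comp hGmeas,
      lintegral_prod_symm (fun z : ℝ × (B → ℝ) => G (Φ z)) ((hGmeas.comp Φ.measurable).aemeasurable)]
  have hMint : ∫⁻ x, M x = ∫⁻ y, ∫⁻ t, M (Φ (t, y)) ∂volume ∂volume := by
    rw [← mp.lintegral_comp hMmeas,
      lintegral_prod_symm (fun z : ℝ × (B → ℝ) => M (Φ z)) ((hMmeas.comp Φ.measurable).aemeasurable)]
  rw [hGint, hMint]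
  -- a.e. differentiability on slices
  have hae : ∀ᵐ y ∂(volume : Measure (B → ℝ)), ∀ᵐ t ∂(volume : Measure ℝ),
      DifferentiableAt ℝ f (Φ (t, y)) := by
    have hN : volume {x : Fin d → ℝ | ¬ DifferentiableAt ℝ f x} = 0 := by
      have := hf.ae_differentiableAt (μ := volume)
      rwa [ae_iff] at this
    have hNmeas : MeasurableSet {x : Fin d → ℝ | ¬ DifferentiableAt ℝ f x} :=
      (measurableSet_of_differentiableAt ℝ f).compl
    refine Measure.ae_ae_of_ae_prod
      (p := fun z : (B → ℝ) × ℝ => DifferentiableAt ℝ f (Φ (z.2, z.1))) ?_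
    rw [ae_iff]
    have hset : {z : (B → ℝ) × ℝ | ¬ DifferentiableAt ℝ f (Φ (z.1, z.2).swap)}
        = Prod.swap ⁻¹' (⇑Φ ⁻¹' {x | ¬ DifferentiableAt ℝ f x}) := rfl
    calc (volume.prod volume) {z : (B → ℝ) × ℝ | ¬ DifferentiableAt ℝ f (Φ (z.2, z.1))}
        = (volume.prod volume) (Prod.swap ⁻¹' (⇑Φ ⁻¹' {x | ¬ DifferentiableAt ℝ f x})) := rfl
      _ = (Measure.map Prod.swap (volume.prod volume)) (⇑Φ ⁻¹' {x | ¬ DifferentiableAt ℝ f x}) := by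
          rw [Measure.map_apply measurable_swap (Φ.measurable hNmeas)]
      _ = (volume.prod volume) (⇑Φ ⁻¹' {x | ¬ DifferentiableAt ℝ f x}) := by
          rw [Measure.prod_swap]
      _ = volume {x : Fin d → ℝ | ¬ DifferentiableAt ℝ f x} := mp.measure_preimage hNmeas.nullMeasurableSet
      _ = 0 := hN
  apply lintegral_mono_ae
  filter_upwards [hae] with y hy
  by_cases hygood : ∀ j : B, y j ∈ Set.Icc (0:ℝ) 1
  · -- good slice
    have hmemt : ∀ t : ℝ, (Φ (t, y) ∈ Set.Icc (0:Fin d → ℝ) 1) ↔ t ∈ Set.Icc (0:ℝ) 1 := by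
      intro t; rw [hmem]; exact ⟨fun h => h.1, fun h => ⟨h, hygood⟩⟩
    have hGrw : (fun t => G (Φ (t, y)))
        = (Set.Icc (0:ℝ) 1).indicator (fun t => (‖g (Φ (t, y))‖₊ : ℝ≥0∞)) := by
      funext t
      by_cases ht : t ∈ Set.Icc (0:ℝ) 1
      · rw [Set.indicator_of_mem ht, hGdef, Set.indicator_of_mem ((hmemt t).2 ht)]
      · rw [Set.indicator_of_notMem ht, hGdef,
          Set.indicator_of_notMem (fun hc => ht ((hmemt t).1 hc))]
    have hMrw : (fun t => M (Φ (t, y)))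
        = (Set.Icc (0:ℝ) 1).indicator
          (fun t => (‖fderiv ℝ f (Φ (t, y)) - ContinuousLinearMap.id ℝ (Fin d → ℝ)‖₊ : ℝ≥0∞)) := by
      funext t
      by_cases ht : t ∈ Set.Icc (0:ℝ) 1
      · rw [Set.indicator_of_mem ht, hMdef, Set.indicator_of_mem ((hmemt t).2 ht)]
      · rw [Set.indicator_of_notMem ht, hMdef,
          Set.indicator_of_notMem (fun hc => ht ((hmemt t).1 hc))]
    rw [hGrw, hMrw, lintegral_indicator measurableSet_Icc, lintegral_indicator measurableSet_Icc]
    -- the 1-D estimate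
    set h : ℝ → (Fin d → ℝ) := fun t => g (Φ (t, y)) with hhdef
    have hlinelip : LipschitzWith 1 (fun t : ℝ => Φ (t, y)) := by
      apply LipschitzWith.of_dist_le_mul
      intro s t
      show dist (Φ (s, y)) (Φ (t, y)) ≤ 1 * dist s t
      rw [dist_eq_norm, hline s y, hline t y]
      have h1 : Φ (0, y) + s • e₀ - (Φ (0, y) + t • e₀) = (s - t) • e₀ := by
        rw [sub_smul]; abel
      rw [h1, norm_smul]
      calc ‖s - t‖ * ‖e₀‖ ≤ ‖s - t‖ * 1 := mul_le_mul_of_nonneg_left he₀ (norm_nonneg _)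
        _ = 1 * dist s t := by rw [dist_eq_norm]; ring
    have hlip : LipschitzWith ((K + 1) * 1) h := hg.comp hlinelip
    have hzero : h 0 = 0 := by
      have hx0 : Φ (0, y) ∈ Set.Icc (0:Fin d → ℝ) 1 := (hmemt 0).2 (by constructor <;> norm_num)
      have hcoord : Φ (0, y) i₀ = 0 := by rw [hΦap]; simp
      have := hbd _ hx0 ⟨i₀, Or.inl (by rw [hcoord]; exact hε)⟩
      rw [hhdef, hgdef]
      simp [this]
    have hderbound : ∀ᵐ t ∂(volume : Measure ℝ), (‖deriv h t‖₊ : ℝ≥0∞)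
        ≤ (‖fderiv ℝ f (Φ (t, y)) - ContinuousLinearMap.id ℝ (Fin d → ℝ)‖₊ : ℝ≥0∞) := by
      filter_upwards [hy] with t ht
      have hgd : DifferentiableAt ℝ g (Φ (t, y)) := ht.sub differentiableAt_fun_id
      have hDg : fderiv ℝ g (Φ (t, y))
          = fderiv ℝ f (Φ (t, y)) - ContinuousLinearMap.id ℝ (Fin d → ℝ) := by
        rw [hgdef]
        rw [fderiv_fun_sub ht differentiableAt_fun_id]
        rw [fderiv_id']
      have hlin : HasDerivAt (fun t : ℝ => Φ (t, y)) e₀ t := by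
        rw [show (fun t : ℝ => Φ (t, y)) = fun t : ℝ => Φ (0, y) + t • e₀ from
          funext (fun t => hline t y)]
        simpa using ((hasDerivAt_id t).smul_const e₀).const_add (Φ (0, y))
      have hh : HasDerivAt h ((fderiv ℝ g (Φ (t, y))) e₀) t :=
        (hgd.hasFDerivAt.comp_hasDerivAt t hlin :)
      rw [hh.deriv, hDg]
      have hnorm : ‖(fderiv ℝ f (Φ (t, y)) - ContinuousLinearMap.id ℝ (Fin d → ℝ)) e₀‖
          ≤ ‖fderiv ℝ f (Φ (t, y)) - ContinuousLinearMap.id ℝ (Fin d → ℝ)‖ := by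
        calc ‖(fderiv ℝ f (Φ (t, y)) - ContinuousLinearMap.id ℝ (Fin d → ℝ)) e₀‖
            ≤ ‖fderiv ℝ f (Φ (t, y)) - ContinuousLinearMap.id ℝ (Fin d → ℝ)‖ * ‖e₀‖ :=
              ContinuousLinearMap.le_opNorm _ _
          _ ≤ ‖fderiv ℝ f (Φ (t, y)) - ContinuousLinearMap.id ℝ (Fin d → ℝ)‖ * 1 :=
              mul_le_mul_of_nonneg_left he₀ (norm_nonneg _)
          _ = _ := mul_one _
      exact_mod_cast ENNReal.coe_le_coe.2 (by exact_mod_cast hnorm)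
    have hkey : ∀ t ∈ Set.Icc (0:ℝ) 1, (‖g (Φ (t, y))‖₊ : ℝ≥0∞)
        ≤ ∫⁻ s in Set.Ioc (0:ℝ) 1, (‖deriv h s‖₊ : ℝ≥0∞) := by
      intro t ht
      have : g (Φ (t, y)) = h t - h 0 := by rw [hzero, sub_zero]
      rw [this]
      exact ftc_lip hlip ht.1 ht.2
    calc ∫⁻ t in Set.Icc (0:ℝ) 1, (‖g (Φ (t, y))‖₊ : ℝ≥0∞)
        ≤ ∫⁻ _ in Set.Icc (0:ℝ) 1, (∫⁻ s in Set.Ioc (0:ℝ) 1, (‖deriv h s‖₊ : ℝ≥0∞)) := by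
          apply lintegral_mono_ae
          filter_upwards [ae_restrict_mem measurableSet_Icc] with t ht
          exact hkey t ht
      _ = (∫⁻ s in Set.Ioc (0:ℝ) 1, (‖deriv h s‖₊ : ℝ≥0∞)) * volume (Set.Icc (0:ℝ) 1) :=
          setLIntegral_const _ _
      _ = ∫⁻ s in Set.Ioc (0:ℝ) 1, (‖deriv h s‖₊ : ℝ≥0∞) := by
          rw [Real.volume_Icc]; norm_num
      _ ≤ ∫⁻ s in Set.Ioc (0:ℝ) 1,
            (‖fderiv ℝ f (Φ (s, y)) - ContinuousLinearMap.id ℝ (Fin d → ℝ)‖₊ : ℝ≥0∞) :=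
          lintegral_mono_ae (ae_restrict_of_ae hderbound)
      _ ≤ ∫⁻ s in Set.Icc (0:ℝ) 1,
            (‖fderiv ℝ f (Φ (s, y)) - ContinuousLinearMap.id ℝ (Fin d → ℝ)‖₊ : ℝ≥0∞) :=
          lintegral_mono' (Measure.restrict_mono Set.Ioc_subset_Icc_self le_rfl) le_rfl
  · -- bad slice : integrand vanishes
    have : ∀ t : ℝ, G (Φ (t, y)) = 0 := by
      intro t
      rw [hGdef]
      apply Set.indicator_of_notMem
      intro hc
      exact hygood ((hmem t y).1 hc).2
    simp only [this]
    simp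


private lemma grid_point {m : ℕ} {t : ℝ} (h0 : 0 ≤ t) (h1 : t ≤ 1)
    (hno : ∀ k : Fin (2^m), ¬ ((k : ℝ)/2^m < t ∧ t < ((k : ℕ) + 1 : ℝ)/2^m)) :
    ∃ j : ℕ, t = (j : ℝ)/2^m := by
  have h2m : (0:ℝ) < 2^m := by positivity
  by_cases ht1 : t = 1
  · exact ⟨2^m, by rw [ht1]; push_cast; field_simp⟩
  have ht1' : t < 1 := lt_of_le_of_ne h1 ht1
  set s : ℝ := t * 2^m with hsdef
  have hs0 : 0 ≤ s := by positivity
  have hs1 : s < 2^m := by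
    rw [hsdef]
    calc t * 2^m < 1 * 2^m := by apply mul_lt_mul_of_pos_right ht1' h2m
      _ = 2^m := one_mul _
  set j : ℕ := ⌊s⌋₊ with hjdef
  have hj1 : (j:ℝ) ≤ s := Nat.floor_le hs0
  have hj2 : s < (j:ℝ) + 1 := Nat.lt_floor_add_one s
  have hjlt : j < 2^m := by
    have : (j:ℝ) < 2^m := lt_of_le_of_lt hj1 hs1
    exact_mod_cast this
  have hk := hno ⟨j, hjlt⟩
  have hklt : t < ((j:ℝ)+1)/2^m := by rw [lt_div_iff₀ h2m]; exact hj2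
  have hge : (j:ℝ)/2^m ≤ t := by rw [div_le_iff₀ h2m]; exact hj1
  refine ⟨j, ?_⟩
  rcases eq_or_lt_of_le hge with heq | hlt
  · exact heq.symm
  · exact absurd ⟨by exact_mod_cast hlt, by exact_mod_cast hklt⟩ hk

set_option maxHeartbeats 2000000 in
theorem stmt_14 (d : ℕ) (hd : 2 ≤ d) (p : ℝ) (hp : 1 ≤ p) :
    ¬ ∃ (m : ℕ) (σ : Equiv.Perm (Fin d → Fin (2 ^ m)))
        (P : (Fin d → ℝ) → Fin d → ℝ),
      σ ≠ 1 ∧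
      (∀ (k : Fin d → Fin (2 ^ m)) (x : Fin d → ℝ),
        (∀ i, x i ∈ Set.Ioo ((k i : ℝ) / 2 ^ m) (((k i : ℕ) + 1 : ℝ) / 2 ^ m)) →
        P x = fun i => x i + (((σ k) i : ℕ) - ((k i : ℕ)) : ℝ) / 2 ^ m) ∧
      (∀ δ > (0 : ℝ), ∀ γ > (0 : ℝ),
        ∃ (f : (Fin d → ℝ) → Fin d → ℝ) (K : NNReal),
          LipschitzWith K f ∧
          Set.BijOn f (Set.Icc (0 : Fin d → ℝ) 1) (Set.Icc 0 1) ∧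
          MeasurePreserving f (volume.restrict (Set.Icc (0 : Fin d → ℝ) 1))
            (volume.restrict (Set.Icc (0 : Fin d → ℝ) 1)) ∧
          (∃ ε > (0 : ℝ), ∀ x ∈ Set.Icc (0 : Fin d → ℝ) 1,
            (∃ i, x i < ε ∨ 1 - ε < x i) → f x = x) ∧
          eLpNorm (fun x => fderiv ℝ f x - ContinuousLinearMap.id ℝ (Fin d → ℝ))
            (ENNReal.ofReal p) (volume.restrict (Set.Icc (0 : Fin d → ℝ) 1))
            < ENNReal.ofReal δ ∧
          volume {x ∈ Set.Icc (0 : Fin d → ℝ) 1 | P x ≠ f x} < ENNReal.ofReal γ) := by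
  rintro ⟨m, σ, P, hσ, hP, happrox⟩
  classical
  have h2m : (0:ℝ) < 2^m := by positivity
  set Q : (Fin d → Fin (2^m)) → Set (Fin d → ℝ) := fun k =>
    Set.univ.pi fun i => Set.Ioo ((k i : ℝ) / 2^m) (((k i : ℕ) + 1 : ℝ) / 2^m) with hQdef
  have hQmeas : ∀ k, MeasurableSet (Q k) := by
    intro k
    exact MeasurableSet.univ_pi fun i => measurableSet_Ioo
  have hQsub : ∀ k, Q k ⊆ Set.Icc (0 : Fin d → ℝ) 1 := by
    intro k x hx
    rw [Set.mem_Icc]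
    constructor <;> intro i
    · have hi := hx i (Set.mem_univ i)
      have h0 : (0:ℝ) ≤ (k i : ℝ)/2^m := by positivity
      exact le_of_lt (lt_of_le_of_lt h0 hi.1)
    · have hi := hx i (Set.mem_univ i)
      have hk : ((k i : ℕ) + 1 : ℝ) ≤ 2^m := by
        have h3 : (k i : ℕ) < 2^m := (k i).isLt
        exact_mod_cast Nat.succ_le_of_lt h3
      have h4 : ((k i : ℕ) + 1 : ℝ)/2^m ≤ 1 := by
        rw [div_le_one h2m]; exact hk
      exact le_of_lt (lt_of_lt_of_le hi.2 h4)
  have hQvol : ∀ k, volume (Q k) = ENNReal.ofReal ((1/2^m)^d) := by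
    intro k
    rw [hQdef]
    rw [volume_pi_pi]
    have h5 : ∀ i : Fin d, volume (Set.Ioo ((k i : ℝ)/2^m) (((k i : ℕ) + 1 : ℝ)/2^m))
        = ENNReal.ofReal (1/2^m) := by
      intro i
      rw [Real.volume_Ioo]
      congr 1
      field_simp
      ring
    simp only [h5]
    rw [Finset.prod_const, Finset.card_univ, Fintype.card_fin,
      ← ENNReal.ofReal_pow (by positivity)]
  have hcover : volume (Set.Icc (0 : Fin d → ℝ) 1 \ ⋃ k, Q k) = 0 := by
    have hnull : volume (⋃ (i : Fin d), ⋃ (j : ℕ), {x : Fin d → ℝ | x i = (j:ℝ)/2^m}) = 0 := by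
      apply measure_iUnion_null
      intro i
      apply measure_iUnion_null
      intro j
      have h6 := Measure.pi_hyperplane (fun _ : Fin d => (volume : Measure ℝ)) i ((j:ℝ)/2^m)
      rw [volume_pi]
      exact h6
    apply measure_mono_null _ hnull
    · intro x hx
      obtain ⟨hxI, hxU⟩ := hx
      rw [Set.mem_Icc] at hxI
      by_cases hall : ∀ i : Fin d, ∃ k : Fin (2^m),
          (k : ℝ)/2^m < x i ∧ x i < ((k : ℕ) + 1 : ℝ)/2^m
      · exfalso
        apply hxU
        choose ks hks using hall
        refine Set.mem_iUnion.2 ⟨ks, ?_⟩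
        intro i _
        exact ⟨(hks i).1, (hks i).2⟩
      · push_neg at hall
        obtain ⟨i, hi⟩ := hall
        obtain ⟨j, hj⟩ := grid_point (hxI.1 i) (hxI.2 i)
          (fun k hk => absurd hk.2 (not_lt.2 (hi k hk.1)))
        exact Set.mem_iUnion.2 ⟨i, Set.mem_iUnion.2 ⟨j, hj⟩⟩
  have hk₀ : ∃ k₀, σ k₀ ≠ k₀ := by
    by_contra hcon
    push_neg at hcon
    exact hσ (Equiv.ext fun k => hcon k)
  obtain ⟨k₀, hk₀ne⟩ := hk₀
  obtain ⟨i₁, hi₁⟩ := Function.ne_iff.1 hk₀ne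
  set c : Fin d → ℝ := fun i => (((σ k₀) i : ℕ) - ((k₀ i : ℕ)) : ℝ) / 2^m with hcdef
  have hc1 : (1:ℝ)/2^m ≤ ‖c‖ := by
    have hne : ((σ k₀) i₁ : ℕ) ≠ (k₀ i₁ : ℕ) := fun hcon => hi₁ (Fin.val_injective hcon)
    have h2 : (1:ℝ) ≤ |((((σ k₀) i₁ : ℕ)) : ℝ) - (((k₀ i₁ : ℕ)) : ℝ)| := by
      have hz : ((((σ k₀) i₁ : ℕ) : ℤ) - ((k₀ i₁ : ℕ) : ℤ)) ≠ 0 := by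
        intro hcon; apply hne; omega
      have h1 : (1:ℤ) ≤ |(((σ k₀) i₁ : ℕ) : ℤ) - ((k₀ i₁ : ℕ) : ℤ)| := Int.one_le_abs hz
      exact_mod_cast h1
    calc (1:ℝ)/2^m ≤ |((((σ k₀) i₁ : ℕ)) : ℝ) - (((k₀ i₁ : ℕ)) : ℝ)| / 2^m := by gcongr
      _ = |c i₁| := by rw [hcdef]; rw [abs_div, abs_of_pos h2m]
      _ = ‖c i₁‖ := (Real.norm_eq_abs _).symm
      _ ≤ ‖c‖ := norm_le_pi_norm c i₁
  set r : ℝ := ((1:ℝ)/2^m)^(d+1) with hrdef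
  have hrpos : 0 < r := by rw [hrdef]; positivity
  set A : ℝ≥0∞ := ∫⁻ x in Set.Icc (0 : Fin d → ℝ) 1, (‖P x - x‖₊ : ℝ≥0∞) with hAdef
  have hlow : ENNReal.ofReal r ≤ A := by
    have hPQ : ∀ x ∈ Q k₀, P x - x = c := by
      intro x hx
      have hx' : ∀ i, x i ∈ Set.Ioo ((k₀ i : ℝ)/2^m) (((k₀ i : ℕ) + 1 : ℝ)/2^m) :=
        fun i => hx i (Set.mem_univ i)
      rw [hP k₀ x hx']
      funext i
      simp [hcdef]
    calc ENNReal.ofReal r = (ENNReal.ofReal (1/2^m)) * ENNReal.ofReal ((1/2^m)^d) := by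
          rw [← ENNReal.ofReal_mul (by positivity)]
          congr 1
          rw [hrdef]; ring
      _ ≤ (‖c‖₊ : ℝ≥0∞) * volume (Q k₀) := by
          apply mul_le_mul'
          · rw [← enorm_eq_nnnorm, ← ofReal_norm]
            exact ENNReal.ofReal_le_ofReal hc1
          · rw [hQvol k₀]
      _ = ∫⁻ x in Q k₀, (‖P x - x‖₊ : ℝ≥0∞) := by
          have h7 : ∫⁻ x in Q k₀, (‖P x - x‖₊ : ℝ≥0∞) = ∫⁻ _ in Q k₀, (‖c‖₊ : ℝ≥0∞) := by
            apply setLIntegral_congr_fun_ae (hQmeas k₀)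
            filter_upwards with x hx
            rw [hPQ x hx]
          rw [h7, setLIntegral_const]
      _ ≤ A := lintegral_mono' (Measure.restrict_mono (hQsub k₀) le_rfl) le_rfl
  obtain ⟨f, K, hflip, hfbij, hfmp, ⟨ε, hεpos, hbdy⟩, hder, hbadvol⟩ :=
    happrox (r/2) (by positivity) (r/2) (by positivity)
  haveI hprob : IsProbabilityMeasure (volume.restrict (Set.Icc (0 : Fin d → ℝ) 1)) := by
    constructor
    rw [Measure.restrict_apply_univ, ← Set.pi_univ_Icc, volume_pi_pi]
    simp [Real.volume_Icc]
  set bad : Set (Fin d → ℝ) := {x ∈ Set.Icc (0 : Fin d → ℝ) 1 | P x ≠ f x} with hbaddef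
  have hptwise : ∀ᵐ x ∂(volume.restrict (Set.Icc (0 : Fin d → ℝ) 1)),
      (‖P x - x‖₊ : ℝ≥0∞) ≤ bad.indicator (fun _ => (1:ℝ≥0∞)) x + (‖f x - x‖₊ : ℝ≥0∞) := by
    have hUmeas : MeasurableSet (⋃ k, Q k) := MeasurableSet.iUnion hQmeas
    have hae1 : ∀ᵐ x ∂(volume.restrict (Set.Icc (0 : Fin d → ℝ) 1)), x ∈ ⋃ k, Q k := by
      rw [ae_iff]
      have h8 : {x : Fin d → ℝ | ¬ x ∈ ⋃ k, Q k} = (⋃ k, Q k)ᶜ := rfl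
      rw [h8, Measure.restrict_apply hUmeas.compl, Set.inter_comm, ← Set.diff_eq]
      exact hcover
    filter_upwards [hae1, ae_restrict_mem measurableSet_Icc] with x hxU hxI
    obtain ⟨k, hk⟩ := Set.mem_iUnion.1 hxU
    have hx' : ∀ i, x i ∈ Set.Ioo ((k i : ℝ)/2^m) (((k i : ℕ) + 1 : ℝ)/2^m) :=
      fun i => hk i (Set.mem_univ i)
    have hPx : P x ∈ Set.Icc (0 : Fin d → ℝ) 1 := by
      rw [hP k x hx']
      apply hQsub (σ k)
      intro i _
      have hlow' := (hx' i).1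
      have hhigh' := (hx' i).2
      constructor
      · have e : x i + (((σ k) i : ℕ) - ((k i : ℕ)) : ℝ)/2^m - (((σ k) i : ℕ) : ℝ)/2^m
            = x i - ((k i : ℕ) : ℝ)/2^m := by ring
        have : ((k i : ℕ) : ℝ)/2^m < x i := hlow'
        show (((σ k) i : ℕ) : ℝ)/2^m < x i + (((σ k) i : ℕ) - ((k i : ℕ)) : ℝ)/2^m
        linarith [e]
      · have e : x i + (((σ k) i : ℕ) - ((k i : ℕ)) : ℝ)/2^m - ((((σ k) i : ℕ) : ℝ) + 1)/2^m
            = x i - (((k i : ℕ) : ℝ) + 1)/2^m := by ring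
        have : x i < (((k i : ℕ) : ℝ) + 1)/2^m := hhigh'
        show x i + (((σ k) i : ℕ) - ((k i : ℕ)) : ℝ)/2^m < (((σ k) i : ℕ) + 1 : ℝ)/2^m
        linarith [e]
    have hfx : f x ∈ Set.Icc (0 : Fin d → ℝ) 1 := hfbij.mapsTo hxI
    by_cases hPf : P x = f x
    · rw [hPf]
      exact le_add_self
    · have hxbad : x ∈ bad := ⟨hxI, hPf⟩
      rw [Set.indicator_of_mem hxbad]
      have tri : (‖P x - x‖₊ : ℝ≥0∞) ≤ (‖P x - f x‖₊ : ℝ≥0∞) + (‖f x - x‖₊ : ℝ≥0∞) := by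
        have h9 : P x - x = (P x - f x) + (f x - x) := by abel
        rw [h9]
        exact_mod_cast nnnorm_add_le _ _
      refine le_trans tri (add_le_add_left ?_ _)
      have hnorm : ‖P x - f x‖ ≤ 1 := by
        rw [pi_norm_le_iff_of_nonneg zero_le_one]
        intro i
        rw [Pi.sub_apply, Real.norm_eq_abs, abs_sub_le_iff]
        have hP0 : (0:ℝ) ≤ P x i := by simpa using (hPx.1 i)
        have hP1 : P x i ≤ 1 := by simpa using (hPx.2 i)
        have hf0 : (0:ℝ) ≤ f x i := by simpa using (hfx.1 i)
        have hf1 : f x i ≤ 1 := by simpa using (hfx.2 i)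
        constructor <;> linarith
      calc (‖P x - f x‖₊ : ℝ≥0∞) = ENNReal.ofReal ‖P x - f x‖ :=
            (ofReal_norm _).symm
        _ ≤ ENNReal.ofReal 1 := ENNReal.ofReal_le_ofReal hnorm
        _ = 1 := ENNReal.ofReal_one
  have hfmeas : Measurable (fun x : Fin d → ℝ => (‖f x - x‖₊ : ℝ≥0∞)) :=
    ((hflip.continuous.sub continuous_id).measurable).enorm
  have hup : A ≤ (∫⁻ x in Set.Icc (0 : Fin d → ℝ) 1, bad.indicator (fun _ => (1:ℝ≥0∞)) x)
      + ∫⁻ x in Set.Icc (0 : Fin d → ℝ) 1, (‖f x - x‖₊ : ℝ≥0∞) := by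
    calc A ≤ ∫⁻ x in Set.Icc (0 : Fin d → ℝ) 1,
          (bad.indicator (fun _ => (1:ℝ≥0∞)) x + (‖f x - x‖₊ : ℝ≥0∞)) :=
          lintegral_mono_ae hptwise
      _ = _ := lintegral_add_right _ hfmeas
  have hX : (∫⁻ x in Set.Icc (0 : Fin d → ℝ) 1, bad.indicator (fun _ => (1:ℝ≥0∞)) x)
      < ENNReal.ofReal (r/2) := by
    calc (∫⁻ x in Set.Icc (0 : Fin d → ℝ) 1, bad.indicator (fun _ => (1:ℝ≥0∞)) x)
        ≤ 1 * (volume.restrict (Set.Icc (0 : Fin d → ℝ) 1)) bad :=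
          lintegral_indicator_const_le _ _
      _ = (volume.restrict (Set.Icc (0 : Fin d → ℝ) 1)) bad := one_mul _
      _ ≤ volume bad := Measure.restrict_apply_le _ _
      _ < ENNReal.ofReal (r/2) := hbadvol
  have hY : (∫⁻ x in Set.Icc (0 : Fin d → ℝ) 1, (‖f x - x‖₊ : ℝ≥0∞))
      < ENNReal.ofReal (r/2) := by
    have hpoin := poincare_one (⟨0, by omega⟩ : Fin d) hflip hεpos hbdy
    have hsm : AEStronglyMeasurable
        (fun x => fderiv ℝ f x - ContinuousLinearMap.id ℝ (Fin d → ℝ))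
        (volume.restrict (Set.Icc (0 : Fin d → ℝ) 1)) :=
      ((measurable_fderiv ℝ f).sub measurable_const).aestronglyMeasurable
    calc (∫⁻ x in Set.Icc (0 : Fin d → ℝ) 1, (‖f x - x‖₊ : ℝ≥0∞))
        ≤ ∫⁻ x in Set.Icc (0 : Fin d → ℝ) 1,
            (‖fderiv ℝ f x - ContinuousLinearMap.id ℝ (Fin d → ℝ)‖₊ : ℝ≥0∞) := hpoin
      _ = eLpNorm (fun x => fderiv ℝ f x - ContinuousLinearMap.id ℝ (Fin d → ℝ)) 1
            (volume.restrict (Set.Icc (0 : Fin d → ℝ) 1)) :=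
          by rw [eLpNorm_one_eq_lintegral_enorm]; rfl
      _ ≤ eLpNorm (fun x => fderiv ℝ f x - ContinuousLinearMap.id ℝ (Fin d → ℝ))
            (ENNReal.ofReal p) (volume.restrict (Set.Icc (0 : Fin d → ℝ) 1)) :=
          eLpNorm_le_eLpNorm_of_exponent_le (ENNReal.one_le_ofReal.2 hp) hsm
      _ < ENNReal.ofReal (r/2) := hder
  have hfinal : ENNReal.ofReal r < ENNReal.ofReal r := by
    calc ENNReal.ofReal r ≤ A := hlow
      _ ≤ _ := hup
      _ < ENNReal.ofReal (r/2) + ENNReal.ofReal (r/2) := ENNReal.add_lt_add hX hY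
      _ = ENNReal.ofReal r := by
          rw [← ENNReal.ofReal_add (by positivity) (by positivity)]
          congr 1
          ring
  exact lt_irrefl _ hfinal
end

section
/- Let Ω be a bounded open subset of ℝ^d, 0 < p < ∞, and for each n let X_n = {f ∈ cl(Lip_λ(Ω)) : for all x, y ∈ cl(Ω), |x−y| ≥ 1/n implies π₁(f)(x) ≠ π₁(f)(y)}, where π₁(f) denotes the uniform-limit (continuous) component of f. Then each X_n is open in cl(Lip_λ(Ω)) with respect to the norm ‖f‖ = max{‖π₁(f)‖_∞, ‖π₂(f)‖_p}. -/
set_option maxHeartbeats 1000000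


theorem stmt_15 (d : ℕ) (Ω : Set (EuclideanSpace ℝ (Fin d)))
    (hΩo : IsOpen Ω) (hΩb : Bornology.IsBounded Ω)
    (Y : Type*) [MetricSpace Y]
    (p : ℝ) (hp : 0 < p)
    (π₁ : Y → C(closure Ω, EuclideanSpace ℝ (Fin d)))
    (hπ : ∀ f g : Y, ∀ x : closure Ω, dist (π₁ f x) (π₁ g x) ≤ dist f g)
    (n : ℕ) (hn : 0 < n) :
    IsOpen {f : Y | ∀ x y : closure Ω, 1 / (n : ℝ) ≤ dist x y → π₁ f x ≠ π₁ f y} := by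
  haveI : CompactSpace (closure Ω) :=
    isCompact_iff_compactSpace.mp hΩb.isCompact_closure
  rw [Metric.isOpen_iff]
  intro f hf
  set K : Set (closure Ω × closure Ω) := {q | 1 / (n : ℝ) ≤ dist q.1 q.2} with hKdef
  by_cases hKe : K.Nonempty
  · have hKcl : IsClosed K :=
      isClosed_le continuous_const (continuous_dist.comp
        (continuous_fst.prodMk continuous_snd))
    have hKc : IsCompact K := hKcl.isCompact
    have hcont : Continuous fun q : closure Ω × closure Ω =>
        dist (π₁ f q.1) (π₁ f q.2) :=
      Continuous.dist ((π₁ f).continuous.comp continuous_fst)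
        ((π₁ f).continuous.comp continuous_snd)
    obtain ⟨q0, hq0, hmin⟩ := hKc.exists_isMinOn hKe hcont.continuousOn
    have hm : 0 < dist (π₁ f q0.1) (π₁ f q0.2) := dist_pos.mpr (hf q0.1 q0.2 hq0)
    refine ⟨dist (π₁ f q0.1) (π₁ f q0.2) / 2, half_pos hm, ?_⟩
    intro g hg x y hxy hEq
    have hmem : (x, y) ∈ K := hxy
    have h1 : dist (π₁ f q0.1) (π₁ f q0.2) ≤ dist (π₁ f x) (π₁ f y) := isMinOn_iff.mp hmin (x, y) hmem
    have h2 : dist (π₁ f x) (π₁ f y) ≤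
        dist (π₁ f x) (π₁ g x) + dist (π₁ g x) (π₁ g y) + dist (π₁ g y) (π₁ f y) :=
      dist_triangle4 _ _ _ _
    rw [hEq, dist_self, add_zero] at h2
    have h3 : dist (π₁ f x) (π₁ g y) ≤ dist f g := by
      have := hπ f g x; rwa [hEq] at this
    have h4 : dist (π₁ g y) (π₁ f y) ≤ dist f g := by
      rw [dist_comm]; exact hπ f g y
    have hg' : dist g f < dist (π₁ f q0.1) (π₁ f q0.2) / 2 := hg
    rw [dist_comm] at hg'
    linarith
  · refine ⟨1, one_pos, fun g _ x y hxy _ => hKe ⟨(x, y), hxy⟩⟩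
end
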